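/- arXiv:2002.09070 — 10 statements merged into one kernel-verified Lean document; each statement's English description precedes it below -/
import Mathlib

section
/- Let σ > 0 and fix θ' in ℝ^d. The map θ ↦ (2/σ)·exp(−‖θ' − θ‖²/σ)·(θ − θ') from ℝ^d to ℝ^d is Lipschitz with Lipschitz constant 2/σ. -/
set_option maxHeartbeats 1000000

open Real ContinuousLinearMap

local notation "⟪" x ", " y "⟫" => @inner ℝ _ _ x y

lemma rbf_exp_sq_bound (u : ℝ) (hu : 0 ≤ u) : (u - 1) ^ 2 ≤ Real.exp u := by
  have h3 := Real.add_one_le_exp (u / 3)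
  have hc : Real.exp u = Real.exp (u / 3) ^ 3 := by
    rw [← Real.exp_nat_mul]
    congr 1
    push_cast
    ring
  have h4 : (u / 3 + 1) ^ 3 ≤ Real.exp (u / 3) ^ 3 :=
    pow_le_pow_left₀ (by linarith) h3 3
  nlinarith [mul_nonneg hu (sq_nonneg (u - 9))]

lemma rbf_scalar (σ t q p : ℝ) (hσ : 0 < σ) (ht : 0 ≤ t) (hq : 0 ≤ q)
    (hp : p ^ 2 ≤ t * q) :
    Real.exp (-t / σ) ^ 2 * (q - 2 * ((2 / σ) * p) * p + ((2 / σ) * p) ^ 2 * t) ≤ q := by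
  have hE : Real.exp (-t / σ) ^ 2 = Real.exp (-(2 * t) / σ) := by
    rw [← Real.exp_nat_mul]
    ring_nf
  rw [hE]
  set e := Real.exp (-(2 * t) / σ) with he
  have he0 : 0 < e := Real.exp_pos _
  have he1 : e ≤ 1 := Real.exp_le_one_iff.mpr (by
    apply div_nonpos_of_nonpos_of_nonneg <;> linarith)
  rcases le_or_gt t σ with hts | hts
  · have hexpr : q - 2 * ((2 / σ) * p) * p + ((2 / σ) * p) ^ 2 * t ≤ q := by
      have h1 : ((2 / σ) * p) ^ 2 * t ≤ ((2 / σ) * p) ^ 2 * σ :=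
        mul_le_mul_of_nonneg_left hts (by positivity)
      have h2 : ((2 / σ) * p) ^ 2 * σ = 2 * ((2 / σ) * p) * p := by
        field_simp
      linarith
    nlinarith [mul_nonneg (sub_nonneg.2 he1) hq, mul_nonneg he0.le (sub_nonneg.2 hexpr)]
  · set u := 2 * t / σ with hu
    have hu2 : 2 < u := by
      rw [hu, lt_div_iff₀ hσ]; linarith
    have heu : e = (Real.exp u)⁻¹ := by
      rw [he, hu, ← Real.exp_neg]
      ring_nf
    have hkey : (u - 1) ^ 2 ≤ Real.exp u := rbf_exp_sq_bound u (by linarith)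
    have hstep1 : q - 2 * ((2 / σ) * p) * p + ((2 / σ) * p) ^ 2 * t ≤ (u - 1) ^ 2 * q := by
      have hdiff : (u - 1) ^ 2 * q - (q - 2 * ((2 / σ) * p) * p + ((2 / σ) * p) ^ 2 * t)
          = (4 / σ) * (t * q - p ^ 2) * (t / σ - 1) := by
        rw [hu]; field_simp; ring
      have h1 : 0 ≤ (4 / σ) * (t * q - p ^ 2) * (t / σ - 1) := by
        apply mul_nonneg (mul_nonneg (by positivity) (by linarith))
        rw [sub_nonneg, le_div_iff₀ hσ]; linarith
      linarith
    have hstep2 : e * ((u - 1) ^ 2 * q) ≤ q := by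
      rw [heu, inv_mul_le_iff₀ (Real.exp_pos u)]
      exact mul_le_mul_of_nonneg_right hkey hq
    calc e * (q - 2 * ((2 / σ) * p) * p + ((2 / σ) * p) ^ 2 * t)
        ≤ e * ((u - 1) ^ 2 * q) := mul_le_mul_of_nonneg_left hstep1 he0.le
      _ ≤ q := hstep2

lemma rbf_core {E : Type*} [NormedAddCommGroup E] [InnerProductSpace ℝ E]
    (σ : ℝ) (hσ : 0 < σ) (x v : E) :
    Real.exp (-‖x‖ ^ 2 / σ) * ‖v - ((2 / σ) * ⟪x, v⟫) • x‖ ≤ ‖v‖ := by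
  have hnorm2 : ‖v - ((2 / σ) * ⟪x, v⟫) • x‖ ^ 2
      = ‖v‖ ^ 2 - 2 * ((2 / σ) * ⟪x, v⟫) * ⟪x, v⟫ + ((2 / σ) * ⟪x, v⟫) ^ 2 * ‖x‖ ^ 2 := by
    rw [norm_sub_sq_real, real_inner_smul_right, norm_smul, real_inner_comm v x,
      Real.norm_eq_abs, mul_pow, sq_abs]
    ring
  have hcs : ⟪x, v⟫ ^ 2 ≤ ‖x‖ ^ 2 * ‖v‖ ^ 2 := by
    have := real_inner_mul_inner_self_le x v
    rwa [real_inner_self_eq_norm_sq, real_inner_self_eq_norm_sq, ← sq] at this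
  have h1 : (Real.exp (-‖x‖ ^ 2 / σ) * ‖v - ((2 / σ) * ⟪x, v⟫) • x‖) ^ 2 ≤ ‖v‖ ^ 2 := by
    rw [mul_pow, hnorm2]
    exact rbf_scalar σ (‖x‖ ^ 2) (‖v‖ ^ 2) ⟪x, v⟫ hσ (by positivity) (by positivity) hcs
  have h2 : 0 ≤ Real.exp (-‖x‖ ^ 2 / σ) * ‖v - ((2 / σ) * ⟪x, v⟫) • x‖ := by positivity
  nlinarith [h1, h2, norm_nonneg v]

/-- For `σ > 0` and fixed `θ' : ℝ^d`, the map `θ ↦ (2/σ) * exp (-‖θ' - θ‖²/σ) • (θ - θ')`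
(the gradient of the RBF kernel in its second argument) is Lipschitz with constant `2/σ`. -/
theorem rbf_kernel_grad_lipschitz (d : ℕ) (σ : ℝ) (hσ : 0 < σ)
    (θ' : EuclideanSpace ℝ (Fin d)) :
    LipschitzWith (2 / σ).toNNReal
      (fun θ : EuclideanSpace ℝ (Fin d) =>
        ((2 / σ) * Real.exp (-‖θ' - θ‖ ^ 2 / σ)) • (θ - θ')) := by
  set c : EuclideanSpace ℝ (Fin d) → ℝ := fun θ => (2 / σ) * Real.exp (-‖θ' - θ‖ ^ 2 / σ) with hc
  set f' : EuclideanSpace ℝ (Fin d) → (EuclideanSpace ℝ (Fin d) →L[ℝ] EuclideanSpace ℝ (Fin d)) := fun θ : EuclideanSpace ℝ (Fin d) =>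
    (c θ) • ContinuousLinearMap.id ℝ (EuclideanSpace ℝ (Fin d))
      - ((c θ * (2 / σ)) • (innerSL ℝ (θ - θ'))).smulRight (θ - θ') with hf'
  have hderiv : ∀ θ : EuclideanSpace ℝ (Fin d), HasFDerivAt
      (fun θ : EuclideanSpace ℝ (Fin d) => ((2 / σ) * Real.exp (-‖θ' - θ‖ ^ 2 / σ)) • (θ - θ')) (f' θ) θ := by
    intro θ
    have h5 := (((((hasFDerivAt_id θ).const_sub θ').norm_sq.neg.mul_const σ⁻¹).exp.const_mul
      (2 / σ)).smul ((hasFDerivAt_id θ).sub_const θ'))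
    simp only [id_eq] at h5
    have hfun : (fun y : EuclideanSpace ℝ (Fin d) => ((2 / σ) * Real.exp (-‖θ' - y‖ ^ 2 * σ⁻¹)) • (y - θ'))
        = fun y : EuclideanSpace ℝ (Fin d) => ((2 / σ) * Real.exp (-‖θ' - y‖ ^ 2 / σ)) • (y - θ') := by
      simp [div_eq_mul_inv]
    replace h5 : HasFDerivAt (fun y : EuclideanSpace ℝ (Fin d) => ((2 / σ) * Real.exp (-‖θ' - y‖ ^ 2 * σ⁻¹)) • (y - θ'))
      ((2 / σ * Real.exp (-‖θ' - θ‖ ^ 2 * σ⁻¹)) • ContinuousLinearMap.id ℝ (EuclideanSpace ℝ (Fin d)) +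
        ((2 / σ) • Real.exp (-‖θ' - θ‖ ^ 2 * σ⁻¹) • σ⁻¹ • -((2 : ℕ) • ((innerSL ℝ (θ' - θ)).comp
          (-ContinuousLinearMap.id ℝ (EuclideanSpace ℝ (Fin d)))))).smulRight (θ - θ')) θ := h5
    rw [hfun] at h5
    convert h5 using 1
    refine ContinuousLinearMap.ext fun v => ?_
    simp only [hf', hc, ContinuousLinearMap.sub_apply, ContinuousLinearMap.add_apply,
      ContinuousLinearMap.smul_apply, ContinuousLinearMap.id_apply,
      ContinuousLinearMap.smulRight_apply, ContinuousLinearMap.comp_apply,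
      ContinuousLinearMap.neg_apply, innerSL_apply_apply, smul_eq_mul,
      ContinuousLinearMap.coe_smul', Pi.smul_apply, div_eq_mul_inv, inner_sub_left,
      inner_neg_right, smul_sub]
    module
  apply lipschitzOnWith_univ.mp
  apply Convex.lipschitzOnWith_of_nnnorm_hasFDerivWithin_le (f' := f')
    (fun x _ => (hderiv x).hasFDerivWithinAt) _ convex_univ
  intro θ _
  rw [← norm_toNNReal]
  apply Real.toNNReal_mono
  apply ContinuousLinearMap.opNorm_le_bound _ (by positivity)
  intro v
  have happ : f' θ v = (2 / σ) • (Real.exp (-‖θ - θ'‖ ^ 2 / σ)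
      • (v - ((2 / σ) * ⟪θ - θ', v⟫) • (θ - θ'))) := by
    simp only [hf', hc, ContinuousLinearMap.sub_apply, ContinuousLinearMap.smul_apply,
      ContinuousLinearMap.id_apply, ContinuousLinearMap.smulRight_apply, innerSL_apply_apply,
      norm_sub_rev θ' θ, smul_eq_mul, inner_sub_left]
    module
  rw [happ, norm_smul, norm_smul, Real.norm_eq_abs, abs_of_pos (by positivity : (0:ℝ) < 2 / σ),
    Real.norm_eq_abs, abs_of_pos (Real.exp_pos _)]
  apply mul_le_mul_of_nonneg_left _ (by positivity)
  exact rbf_core σ hσ (θ - θ') v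
end

section
/- Fix σ > 0 and θ' ∈ ℝ^d, and let V : ℝ^d → ℝ be differentiable with gradient ∇V. Then for every θ ∈ ℝ^d: ‖−exp(−‖θ'−θ‖²/σ)·∇V(θ') + (2/σ)·exp(−‖θ'−θ‖²/σ)·(θ − θ')‖ ≤ ‖∇V(θ')‖ + √(2/(σ·e)), where e is Euler's number. -/
lemma stein_aux (σ : ℝ) (hσ : 0 < σ) (r : ℝ) (hr : 0 ≤ r) :
    (2 / σ) * Real.exp (-r ^ 2 / σ) * r ≤ Real.sqrt (2 / (σ * Real.exp 1)) := by
  have hs : (0:ℝ) < Real.sqrt σ := Real.sqrt_pos.mpr hσ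
  have hsq : Real.sqrt σ * Real.sqrt σ = σ := Real.mul_self_sqrt hσ.le
  have h2 : Real.sqrt 2 * Real.sqrt 2 = 2 := Real.mul_self_sqrt (by norm_num)
  have hEhalf : Real.sqrt (Real.exp 1) = Real.exp (1/2) := by
    rw [show Real.exp 1 = Real.exp (1/2) ^ 2 by rw [← Real.exp_nat_mul]; norm_num,
      Real.sqrt_sq (Real.exp_pos _).le]
  have hkey : Real.sqrt 2 * r * Real.exp (1/2) ≤ Real.sqrt σ * Real.exp (r^2/σ) := by
    have h1' : r^2/σ + 1/2 ≤ Real.exp (r^2/σ) / Real.exp (1/2) := by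
      rw [le_div_iff₀ (Real.exp_pos _)]
      have h := Real.add_one_le_exp (r^2/σ - 1/2)
      calc (r^2/σ + 1/2) * Real.exp (1/2)
          ≤ Real.exp (r^2/σ - 1/2) * Real.exp (1/2) :=
            mul_le_mul_of_nonneg_right (by linarith) (Real.exp_pos _).le
        _ = Real.exp (r^2/σ) := by rw [← Real.exp_add]; ring_nf
    have hamgm : Real.sqrt 2 * r ≤ Real.sqrt σ * (r^2/σ + 1/2) := by
      rw [div_add' _ _ _ hσ.ne', ← mul_div_assoc, le_div_iff₀ hσ]
      have e1 : Real.sqrt σ * (Real.sqrt 2 * r - Real.sqrt σ)^2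
          = 2 * (Real.sqrt σ * r^2) - 2*(Real.sqrt 2 * r * σ) + σ * Real.sqrt σ := by
        linear_combination (Real.sqrt σ * r^2) * h2 + (Real.sqrt σ - 2*Real.sqrt 2*r) * hsq
      nlinarith [mul_nonneg hs.le (sq_nonneg (Real.sqrt 2 * r - Real.sqrt σ)), e1]
    calc Real.sqrt 2 * r * Real.exp (1/2)
        ≤ Real.sqrt σ * (r^2/σ + 1/2) * Real.exp (1/2) :=
          mul_le_mul_of_nonneg_right hamgm (Real.exp_pos _).le
      _ ≤ Real.sqrt σ * (Real.exp (r^2/σ) / Real.exp (1/2)) * Real.exp (1/2) :=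
          mul_le_mul_of_nonneg_right (mul_le_mul_of_nonneg_left h1' hs.le) (Real.exp_pos _).le
      _ = Real.sqrt σ * Real.exp (r^2/σ) := by field_simp
  have hrw : Real.sqrt (2 / (σ * Real.exp 1)) = Real.sqrt 2 / (Real.sqrt σ * Real.sqrt (Real.exp 1)) := by
    rw [Real.sqrt_div (by norm_num : (0:ℝ) ≤ 2), Real.sqrt_mul hσ.le]
  rw [hrw, hEhalf,
    show (2/σ) * Real.exp (-r^2/σ) * r = 2 * Real.exp (-r^2/σ) * r / σ by ring,
    div_le_div_iff₀ hσ (by positivity)]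
  have hA : Real.exp (-r^2/σ) * Real.exp (r^2/σ) = 1 := by
    rw [← Real.exp_add, neg_div, neg_add_cancel, Real.exp_zero]
  calc 2 * Real.exp (-r^2/σ) * r * (Real.sqrt σ * Real.exp (1/2))
      = (Real.exp (-r^2/σ) * Real.sqrt 2 * Real.sqrt σ) * (Real.sqrt 2 * r * Real.exp (1/2)) := by
        linear_combination (-(Real.exp (-r^2/σ) * Real.sqrt σ * r * Real.exp (1/2))) * h2
    _ ≤ (Real.exp (-r^2/σ) * Real.sqrt 2 * Real.sqrt σ) * (Real.sqrt σ * Real.exp (r^2/σ)) :=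
        mul_le_mul_of_nonneg_left hkey
          (by positivity)
    _ = Real.sqrt 2 * σ := by
        linear_combination (Real.sqrt 2 * σ) * hA
          + (Real.sqrt 2 * Real.exp (-r^2/σ) * Real.exp (r^2/σ)) * hsq

/-- Uniform bound on the single-particle Stein update associated with the Dirac mass at `θ'`:
`‖-exp(-‖θ'-θ‖²/σ) • ∇V θ' + ((2/σ) exp(-‖θ'-θ‖²/σ)) • (θ - θ')‖ ≤ ‖∇V θ'‖ + √(2/(σe))`. -/
theorem stein_single_particle_bound (d : ℕ) (σ : ℝ) (hσ : 0 < σ)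
    (θ' : EuclideanSpace ℝ (Fin d)) (V : EuclideanSpace ℝ (Fin d) → ℝ)
    (hV : Differentiable ℝ V) :
    ∀ θ : EuclideanSpace ℝ (Fin d),
      ‖(-Real.exp (-‖θ' - θ‖ ^ 2 / σ)) • gradient V θ'
          + ((2 / σ) * Real.exp (-‖θ' - θ‖ ^ 2 / σ)) • (θ - θ')‖ ≤
        ‖gradient V θ'‖ + Real.sqrt (2 / (σ * Real.exp 1)) := by
  intro θ
  set r : ℝ := ‖θ' - θ‖ with hr
  have hr0 : 0 ≤ r := norm_nonneg _
  have hA1 : Real.exp (-r ^ 2 / σ) ≤ 1 := Real.exp_le_one_iff.mpr (by rw [neg_div]; exact neg_nonpos.mpr (by positivity))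
  have hA0 : 0 < Real.exp (-r ^ 2 / σ) := Real.exp_pos _
  refine le_trans (norm_add_le _ _) (add_le_add ?_ ?_)
  · rw [norm_smul, norm_neg, Real.norm_eq_abs, abs_of_pos hA0]
    exact mul_le_of_le_one_left (norm_nonneg _) hA1
  · rw [norm_smul, Real.norm_eq_abs, abs_of_pos (by positivity),
      show ‖θ - θ'‖ = r by rw [hr, norm_sub_rev]]
    exact stein_aux σ hσ r hr0
end

section
/- Fix σ > 0 and θ' ∈ ℝ^d, and let V : ℝ^d → ℝ be differentiable with gradient ∇V. Then the map θ ↦ −exp(−‖θ'−θ‖²/σ)·∇V(θ') + (2/σ)·exp(−‖θ'−θ‖²/σ)·(θ − θ') from ℝ^d to ℝ^d is Lipschitz with Lipschitz constant √(2/(σ·e))·‖∇V(θ')‖ + 2/σ, where e is Euler's number. -/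
open Real
open scoped RealInnerProductSpace

lemma stein_aux_t_exp (t : ℝ) : t * Real.exp (-t) ≤ Real.exp (-1) := by
  have h : t ≤ Real.exp (t - 1) := by
    have := Real.add_one_le_exp (t - 1); linarith
  calc t * Real.exp (-t) ≤ Real.exp (t - 1) * Real.exp (-t) :=
        mul_le_mul_of_nonneg_right h (Real.exp_pos _).le
    _ = Real.exp (-1) := by rw [← Real.exp_add]; congr 1; ring

lemma stein_aux_sq_exp {t : ℝ} (ht : 0 ≤ t) : (t - 1) ^ 2 ≤ Real.exp t := by
  have h : 1 + t / 3 ≤ Real.exp (t / 3) := by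
    have := Real.add_one_le_exp (t / 3); linarith
  have h3 : Real.exp t = Real.exp (t / 3) ^ 3 := by
    rw [← Real.exp_nat_mul]; congr 1; push_cast; ring
  have h1 : (1 + t / 3) ^ 3 ≤ Real.exp (t / 3) ^ 3 :=
    pow_le_pow_left₀ (by linarith) h 3
  nlinarith [mul_nonneg ht (sq_nonneg (t - 9))]

lemma stein_key_bound {σ n m P : ℝ} (hσ : 0 < σ) (hn : 0 ≤ n) (hm : 0 ≤ m)
    (hP : 0 ≤ P) (hPnm : P ≤ n * m) :
    Real.exp (-n / σ) ^ 2 * (m + (4 / σ) * P * (n / σ - 1)) ≤ m := by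
  have he2 : Real.exp (-n / σ) ^ 2 = Real.exp (-(2 * n / σ)) := by
    rw [sq, ← Real.exp_add]; ring_nf
  rw [he2]
  have hEpos : 0 < Real.exp (-(2 * n / σ)) := Real.exp_pos _
  by_cases hcase : n ≤ σ
  · have hE1 : Real.exp (-(2 * n / σ)) ≤ 1 := by
      apply Real.exp_le_one_iff.2
      have : 0 ≤ 2 * n / σ := by positivity
      linarith
    have hT : (4 / σ) * P * (n / σ - 1) ≤ 0 := by
      apply mul_nonpos_iff.2
      apply Or.inl
      constructor
      · positivity
      · have : n / σ ≤ 1 := (div_le_one hσ).2 hcase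
        linarith
    have a1 : Real.exp (-(2 * n / σ)) * ((4 / σ) * P * (n / σ - 1)) ≤ 0 :=
      mul_nonpos_iff.2 (Or.inl ⟨hEpos.le, hT⟩)
    have a2 : Real.exp (-(2 * n / σ)) * m ≤ m := mul_le_of_le_one_left hm hE1
    nlinarith [a1, a2]
  · push_neg at hcase
    have h1 : Real.exp (-(2 * n / σ)) * (2 * n / σ - 1) ^ 2 ≤ 1 := by
      have h2 := stein_aux_sq_exp (t := 2 * n / σ) (by positivity)
      rw [Real.exp_neg, inv_mul_le_iff₀ (Real.exp_pos _)]
      linarith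
    have hT : m + (4 / σ) * P * (n / σ - 1) ≤ m * (2 * n / σ - 1) ^ 2 := by
      have hfac : 0 ≤ (4 / σ) * (n / σ - 1) := by
        apply mul_nonneg (by positivity)
        have : 1 ≤ n / σ := (one_le_div hσ).2 hcase.le
        linarith
      have hid : m * (2 * n / σ - 1) ^ 2 - (m + (4 / σ) * P * (n / σ - 1))
          = ((4 / σ) * (n / σ - 1)) * (n * m - P) := by ring
      have hpr := mul_nonneg hfac (sub_nonneg.2 hPnm)
      linarith
    calc Real.exp (-(2 * n / σ)) * (m + (4 / σ) * P * (n / σ - 1))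
        ≤ Real.exp (-(2 * n / σ)) * (m * (2 * n / σ - 1) ^ 2) :=
          mul_le_mul_of_nonneg_left hT hEpos.le
      _ = m * (Real.exp (-(2 * n / σ)) * (2 * n / σ - 1) ^ 2) := by ring
      _ ≤ m * 1 := mul_le_mul_of_nonneg_left h1 hm
      _ = m := mul_one m

lemma stein_scalar_deriv_bound {σ : ℝ} (hσ : 0 < σ) (r : ℝ) :
    |Real.exp (-r ^ 2 / σ) * (-(2 * r) / σ)| ≤ Real.sqrt (2 / (σ * Real.exp 1)) := by
  have hx : 0 ≤ |Real.exp (-r ^ 2 / σ) * (-(2 * r) / σ)| := abs_nonneg _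
  rw [← Real.sqrt_sq hx]
  apply Real.sqrt_le_sqrt
  rw [sq_abs]
  have he2 : Real.exp (-r ^ 2 / σ) ^ 2 = Real.exp (-(2 * r ^ 2 / σ)) := by
    rw [sq, ← Real.exp_add]; ring_nf
  have key := stein_aux_t_exp (2 * r ^ 2 / σ)
  have hEq : (Real.exp (-r ^ 2 / σ) * (-(2 * r) / σ)) ^ 2
      = (2 / σ) * ((2 * r ^ 2 / σ) * Real.exp (-(2 * r ^ 2 / σ))) := by
    rw [← he2]; ring
  rw [hEq]
  have hR : 2 / (σ * Real.exp 1) = (2 / σ) * Real.exp (-1) := by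
    rw [Real.exp_neg]; ring
  rw [hR]
  exact mul_le_mul_of_nonneg_left key (by positivity)

lemma stein_expsq_lip {σ : ℝ} (hσ : 0 < σ) :
    LipschitzWith (Real.sqrt (2 / (σ * Real.exp 1))).toNNReal
      (fun r : ℝ => Real.exp (-r ^ 2 / σ)) := by
  apply lipschitzWith_of_nnnorm_deriv_le (((differentiable_pow 2).neg.div_const σ).exp)
  intro r
  have h1 : HasDerivAt (fun r : ℝ => -r ^ 2 / σ) (-(2 * r) / σ) r := by
    simpa using ((hasDerivAt_pow 2 r).neg.div_const σ)
  have hd := h1.exp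
  change ‖deriv (fun x : ℝ => Real.exp (-x ^ 2 / σ)) r‖₊ ≤ _
  rw [hd.deriv, ← norm_toNNReal]
  apply Real.toNNReal_mono
  rw [Real.norm_eq_abs]
  exact stein_scalar_deriv_bound hσ r

lemma stein_gmap_lip {d : ℕ} {σ : ℝ} (hσ : 0 < σ) :
    LipschitzWith (2 / σ).toNNReal
      (fun u : EuclideanSpace ℝ (Fin d) => ((2 / σ) * Real.exp (-‖u‖ ^ 2 / σ)) • u) := by
  set E := EuclideanSpace ℝ (Fin d) with hE
  have hA : ∀ u : E, HasFDerivAt (fun x : E => ((2 / σ) * Real.exp (-‖x‖ ^ 2 / σ)) • x)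
      ((((2 / σ) * Real.exp (-‖u‖ ^ 2 / σ)) • ContinuousLinearMap.id ℝ E)
        + (((2 / σ) * (Real.exp (-‖u‖ ^ 2 / σ) * (-1 / σ))) •
            (2 • ((innerSL ℝ u).comp (ContinuousLinearMap.id ℝ E)))).smulRight u) u := by
    intro u
    have hq : HasFDerivAt (fun x : E => ‖x‖ ^ 2)
        (2 • ((innerSL ℝ u).comp (ContinuousLinearMap.id ℝ E))) u :=
      (hasFDerivAt_id u).norm_sq
    have hc : HasDerivAt (fun t : ℝ => (2 / σ) * Real.exp (-t / σ))
        ((2 / σ) * (Real.exp (-‖u‖ ^ 2 / σ) * (-1 / σ))) (‖u‖ ^ 2) := by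
      have h0 : HasDerivAt (fun t : ℝ => -t / σ) (-1 / σ) (‖u‖ ^ 2) := by
        simpa using ((hasDerivAt_id (‖u‖ ^ 2)).neg.div_const σ)
      exact (h0.exp).const_mul (2 / σ)
    exact (hc.comp_hasFDerivAt u hq).smul (hasFDerivAt_id u)
  apply lipschitzWith_of_nnnorm_fderiv_le (fun u => (hA u).differentiableAt)
  intro u
  rw [(hA u).fderiv, ← norm_toNNReal]
  apply Real.toNNReal_mono
  apply ContinuousLinearMap.opNorm_le_bound _ (by positivity)
  intro v
  have hAv : ((((2 / σ) * Real.exp (-‖u‖ ^ 2 / σ)) • ContinuousLinearMap.id ℝ E)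
        + (((2 / σ) * (Real.exp (-‖u‖ ^ 2 / σ) * (-1 / σ))) •
            (2 • ((innerSL ℝ u).comp (ContinuousLinearMap.id ℝ E)))).smulRight u) v
      = ((2 / σ) * Real.exp (-‖u‖ ^ 2 / σ)) • v
        + (((2 / σ) * (Real.exp (-‖u‖ ^ 2 / σ) * (-1 / σ))) * (2 * ⟪u, v⟫)) • u := by
    simp [ContinuousLinearMap.add_apply, ContinuousLinearMap.smul_apply,
      ContinuousLinearMap.smulRight_apply, ContinuousLinearMap.comp_apply,
      ContinuousLinearMap.id_apply, two_smul, smul_smul]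
    ring_nf
  rw [hAv]
  have hcs' : ⟪u, v⟫ ^ 2 ≤ ‖u‖ ^ 2 * ‖v‖ ^ 2 := by
    have h := real_inner_mul_inner_self_le u v
    rw [real_inner_self_eq_norm_sq, real_inner_self_eq_norm_sq] at h
    nlinarith [h]
  have hkey := stein_key_bound (σ := σ) (n := ‖u‖ ^ 2) (m := ‖v‖ ^ 2)
    (P := ⟪u, v⟫ ^ 2) hσ (sq_nonneg _) (sq_nonneg _) (sq_nonneg _) hcs'
  have hkey2 := mul_le_mul_of_nonneg_left hkey
    (le_of_lt (by positivity : (0:ℝ) < 4 / σ ^ 2))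
  have hsq : ‖((2 / σ) * Real.exp (-‖u‖ ^ 2 / σ)) • v
        + (((2 / σ) * (Real.exp (-‖u‖ ^ 2 / σ) * (-1 / σ))) * (2 * ⟪u, v⟫)) • u‖ ^ 2
      ≤ (2 / σ * ‖v‖) ^ 2 := by
    rw [norm_add_sq_real, norm_smul, norm_smul, real_inner_smul_left,
      real_inner_smul_right, real_inner_comm u v, mul_pow, mul_pow,
      Real.norm_eq_abs, Real.norm_eq_abs, sq_abs, sq_abs]
    have hσ' : σ ≠ 0 := ne_of_gt hσ
    have h2 : (2 / σ * Real.exp (-‖u‖ ^ 2 / σ)) ^ 2 * ‖v‖ ^ 2 +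
          2 * (2 / σ * Real.exp (-‖u‖ ^ 2 / σ) *
            (2 / σ * (Real.exp (-‖u‖ ^ 2 / σ) * (-1 / σ)) * (2 * ⟪u, v⟫) * ⟪u, v⟫)) +
        (2 / σ * (Real.exp (-‖u‖ ^ 2 / σ) * (-1 / σ)) * (2 * ⟪u, v⟫)) ^ 2 * ‖u‖ ^ 2
        = 4 / σ ^ 2 * (Real.exp (-‖u‖ ^ 2 / σ) ^ 2 *
            (‖v‖ ^ 2 + 4 / σ * ⟪u, v⟫ ^ 2 * (‖u‖ ^ 2 / σ - 1))) := by
      field_simp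
      ring
    have h3 : (2 / σ * ‖v‖) ^ 2 = 4 / σ ^ 2 * ‖v‖ ^ 2 := by field_simp; ring
    rw [h2, h3]
    exact hkey2
  have h1 := Real.sqrt_le_sqrt hsq
  rwa [Real.sqrt_sq (norm_nonneg _), Real.sqrt_sq (by positivity)] at h1


/-- Lipschitz bound on the single-particle Stein update associated with the Dirac mass at `θ'`:
the map `θ ↦ -exp(-‖θ'-θ‖²/σ) • ∇V θ' + ((2/σ) exp(-‖θ'-θ‖²/σ)) • (θ - θ')` is Lipschitz with
constant `√(2/(σe)) * ‖∇V θ'‖ + 2/σ`. -/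
theorem stein_single_particle_lipschitz (d : ℕ) (σ : ℝ) (hσ : 0 < σ)
    (θ' : EuclideanSpace ℝ (Fin d)) (V : EuclideanSpace ℝ (Fin d) → ℝ)
    (hV : Differentiable ℝ V) :
    LipschitzWith
      (Real.sqrt (2 / (σ * Real.exp 1)) * ‖gradient V θ'‖ + 2 / σ).toNNReal
      (fun θ : EuclideanSpace ℝ (Fin d) =>
        (-Real.exp (-‖θ' - θ‖ ^ 2 / σ)) • gradient V θ'
          + ((2 / σ) * Real.exp (-‖θ' - θ‖ ^ 2 / σ)) • (θ - θ')) := by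
  have hF1 : LipschitzWith (‖gradient V θ'‖₊ * (Real.sqrt (2 / (σ * Real.exp 1))).toNNReal)
      (fun θ : EuclideanSpace ℝ (Fin d) =>
        (-Real.exp (-‖θ' - θ‖ ^ 2 / σ)) • gradient V θ') := by
    have hsmul : LipschitzWith ‖gradient V θ'‖₊ (fun t : ℝ => t • gradient V θ') := by
      apply LipschitzWith.of_dist_le_mul
      intro x y
      rw [dist_eq_norm, dist_eq_norm, ← sub_smul, norm_smul]
      exact le_of_eq (mul_comm _ _)
    have hnorm : LipschitzWith 1 (fun θ : EuclideanSpace ℝ (Fin d) => ‖θ' - θ‖) := by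
      have h1 : LipschitzWith 1 (fun θ : EuclideanSpace ℝ (Fin d) => θ' - θ) := by
        simpa using (LipschitzWith.const (α := EuclideanSpace ℝ (Fin d)) θ').sub
          LipschitzWith.id
      simpa [Function.comp_def] using lipschitzWith_one_norm.comp h1
    have hneg' : LipschitzWith ((Real.sqrt (2 / (σ * Real.exp 1))).toNNReal)
        (-((fun r : ℝ => Real.exp (-r ^ 2 / σ))
            ∘ (fun θ : EuclideanSpace ℝ (Fin d) => ‖θ' - θ‖))) := by
      simpa using ((stein_expsq_lip hσ).comp hnorm).neg
    have hfun1 : (fun θ : EuclideanSpace ℝ (Fin d) =>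
          (-Real.exp (-‖θ' - θ‖ ^ 2 / σ)) • gradient V θ')
        = (fun t : ℝ => t • gradient V θ')
            ∘ (-((fun r : ℝ => Real.exp (-r ^ 2 / σ))
                ∘ (fun θ : EuclideanSpace ℝ (Fin d) => ‖θ' - θ‖))) := by
      funext θ; simp [Function.comp]
    rw [hfun1]
    exact hsmul.comp hneg'
  have hF2 : LipschitzWith ((2 / σ).toNNReal)
      (fun θ : EuclideanSpace ℝ (Fin d) =>
        ((2 / σ) * Real.exp (-‖θ' - θ‖ ^ 2 / σ)) • (θ - θ')) := by
    have hsub : LipschitzWith 1 (fun θ : EuclideanSpace ℝ (Fin d) => θ - θ') := by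
      simpa using LipschitzWith.id.sub
        (LipschitzWith.const (α := EuclideanSpace ℝ (Fin d)) θ')
    have hfun : (fun θ : EuclideanSpace ℝ (Fin d) =>
          ((2 / σ) * Real.exp (-‖θ' - θ‖ ^ 2 / σ)) • (θ - θ'))
        = (fun u : EuclideanSpace ℝ (Fin d) => ((2 / σ) * Real.exp (-‖u‖ ^ 2 / σ)) • u)
            ∘ (fun θ => θ - θ') := by
      funext θ; simp only [Function.comp_apply]; rw [norm_sub_rev]
    rw [hfun]
    simpa using (stein_gmap_lip hσ).comp hsub
  have hsum := hF1.add hF2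
  have hC : (Real.sqrt (2 / (σ * Real.exp 1)) * ‖gradient V θ'‖ + 2 / σ).toNNReal
      = ‖gradient V θ'‖₊ * (Real.sqrt (2 / (σ * Real.exp 1))).toNNReal
          + (2 / σ).toNNReal := by
    rw [Real.toNNReal_add (by positivity) (div_nonneg (by norm_num) hσ.le)]
    rw [Real.toNNReal_mul (Real.sqrt_nonneg _)]
    rw [norm_toNNReal, mul_comm ‖gradient V θ'‖₊]
  rw [hC]
  exact hsum
end

section
/- Fix σ > 0, let V : ℝ^d → ℝ be continuously differentiable with gradient ∇V, and let ρ be a probability measure on ℝ^d such that ∫‖∇V(θ')‖ dρ(θ') < ∞. Then the Stein variational velocity field φ[ρ] is Lipschitz on ℝ^d with Lipschitz constant √(2/(σ·e))·∫‖∇V(θ')‖ dρ(θ') + 2/σ, where e is Euler's number. -/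
open MeasureTheory

section helpers


lemma bnd' (σ : ℝ) (hσ : 0 < σ) (r : ℝ) (hr : 0 ≤ r) :
    2 / σ * r * Real.exp (-r ^ 2 / σ) ≤ Real.sqrt (2 / (σ * Real.exp 1)) := by
  set E := Real.exp 1 with hE
  set α := Real.exp (-r ^ 2 / σ) with hα
  set X := Real.exp (2 * r ^ 2 / σ) with hX
  have hEpos : (0:ℝ) < E := Real.exp_pos 1
  have hαpos : (0:ℝ) < α := Real.exp_pos _
  have hXpos : (0:ℝ) < X := Real.exp_pos _
  have hL : 0 ≤ 2 / σ * r * α := by positivity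
  have hXα : α ^ 2 * X = 1 := by
    rw [hα, hX, ← Real.exp_nat_mul, ← Real.exp_add]
    rw [show (2:ℕ) * (-r ^ 2 / σ) + 2 * r ^ 2 / σ = 0 by push_cast; ring, Real.exp_zero]
  have key2 : 2 * r ^ 2 / σ * E ≤ X := by
    have h : 2 * r ^ 2 / σ ≤ Real.exp (2 * r ^ 2 / σ - 1) := by
      linarith [Real.add_one_le_exp (2 * r ^ 2 / σ - 1)]
    have h2 : Real.exp (2 * r ^ 2 / σ - 1) * E = X := by
      rw [hE, hX, ← Real.exp_add]; ring_nf
    nlinarith [mul_le_mul_of_nonneg_right h hEpos.le]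
  have hmain : 2 * r ^ 2 / σ * E * α ^ 2 ≤ 1 := by
    calc 2 * r ^ 2 / σ * E * α ^ 2 ≤ X * α ^ 2 := by nlinarith [sq_nonneg α]
    _ = 1 := by rw [mul_comm]; exact hXα
  have hfinal : (2 / σ * r * α) ^ 2 ≤ 2 / (σ * E) := by
    have hid : (2 / (σ * E)) = (2 / σ * r * α) ^ 2 + 2 / (σ * E) * (1 - 2 * r ^ 2 / σ * E * α ^ 2) := by
      field_simp; ring
    have h4 : 0 ≤ 2 / (σ * E) * (1 - 2 * r ^ 2 / σ * E * α ^ 2) :=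
      mul_nonneg (by positivity) (by linarith)
    linarith [hid ▸ le_refl (2 / (σ * E))]
  calc 2 / σ * r * α = Real.sqrt ((2 / σ * r * α) ^ 2) := (Real.sqrt_sq hL).symm
  _ ≤ Real.sqrt (2 / (σ * E)) := Real.sqrt_le_sqrt hfinal


lemma quad (α β p X W : ℝ) (hα2 : α ^ 2 ≤ 1) (hp2 : p ^ 2 ≤ X * W) (hW : 0 ≤ W)
    (h6 : (α + β * X) ^ 2 ≤ 1) :
    α ^ 2 * W + 2 * (α * (β * p)) * p + (β * p) ^ 2 * X ≤ W := by
  rcases le_or_gt (2 * α * β + β ^ 2 * X) 0 with hA | hA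
  · nlinarith [mul_le_mul_of_nonneg_right hA (sq_nonneg p),
      mul_le_mul_of_nonneg_right hα2 hW]
  · nlinarith [mul_le_mul_of_nonneg_left hp2 hA.le,
      mul_le_mul_of_nonneg_right h6 hW]


variable {E : Type*} [NormedAddCommGroup E] [InnerProductSpace ℝ E]


lemma opnorm_bound (σ : ℝ) (hσ : 0 < σ) (x v : E) :
    ‖Real.exp (-‖x‖ ^ 2 / σ) • v
      + ((Real.exp (-‖x‖ ^ 2 / σ) * (-2 / σ)) * (inner ℝ x v : ℝ)) • x‖ ≤ ‖v‖ := by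
  set α := Real.exp (-‖x‖ ^ 2 / σ) with hαdef
  set p : ℝ := inner ℝ x v with hpdef
  have hαpos : (0:ℝ) < α := Real.exp_pos _
  have hα1 : α ≤ 1 := Real.exp_le_one_iff.mpr
    (div_nonpos_of_nonpos_of_nonneg (neg_nonpos.mpr (by positivity)) hσ.le)
  have hα2 : α ^ 2 ≤ 1 := by nlinarith
  set t := ‖x‖ ^ 2 / σ with htdef
  have ht0 : 0 ≤ t := by positivity
  have hXt : ‖x‖ ^ 2 = t * σ := by rw [htdef]; field_simp
  have hp2 : p ^ 2 ≤ ‖x‖ ^ 2 * ‖v‖ ^ 2 := by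
    have := abs_real_inner_le_norm x v
    nlinarith [abs_nonneg p, sq_abs p]
  have hexp : α * Real.exp t = 1 := by
    rw [hαdef, ← Real.exp_add, htdef,
      show -‖x‖ ^ 2 / σ + ‖x‖ ^ 2 / σ = 0 by ring, Real.exp_zero]
  have hQ : 1 + t + t ^ 2 / 4 ≤ Real.exp t := by
    have h5 : 1 + t / 2 ≤ Real.exp (t / 2) := by linarith [Real.add_one_le_exp (t / 2)]
    have hsq : Real.exp (t / 2) * Real.exp (t / 2) = Real.exp t := by
      rw [← Real.exp_add]; ring_nf
    nlinarith [mul_self_le_mul_self (by linarith : (0:ℝ) ≤ 1 + t / 2) h5]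
  have habs : (1 - 2 * t) ^ 2 ≤ Real.exp t ^ 2 := by
    have hc : (0:ℝ) ≤ 3 * t + t ^ 2 / 4 := by positivity
    have hd : (0:ℝ) ≤ 2 - t + t ^ 2 / 4 := by nlinarith [sq_nonneg (t / 2 - 1)]
    have hQ0 : (0:ℝ) ≤ 1 + t + t ^ 2 / 4 := by positivity
    nlinarith [mul_nonneg hc hd, mul_le_mul hQ hQ hQ0 (le_trans hQ0 hQ)]
  have h6 : (α + α * (-2 / σ) * ‖x‖ ^ 2) ^ 2 ≤ 1 := by
    have heq : α + α * (-2 / σ) * ‖x‖ ^ 2 = α * (1 - 2 * t) := by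
      rw [hXt]; field_simp; ring
    rw [heq]
    calc (α * (1 - 2 * t)) ^ 2 = α ^ 2 * (1 - 2 * t) ^ 2 := by ring
    _ ≤ α ^ 2 * Real.exp t ^ 2 := by nlinarith [sq_nonneg α]
    _ = (α * Real.exp t) ^ 2 := by ring
    _ = 1 := by rw [hexp]; norm_num
  have hns : ‖α • v + ((α * (-2 / σ)) * p) • x‖ ^ 2
      = α ^ 2 * ‖v‖ ^ 2 + 2 * (α * ((α * (-2 / σ)) * p)) * p
        + ((α * (-2 / σ)) * p) ^ 2 * ‖x‖ ^ 2 := by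
    have hvx : (inner ℝ v x : ℝ) = p := by rw [hpdef]; exact (real_inner_comm v x).symm
    rw [norm_add_sq_real, norm_smul, norm_smul, real_inner_smul_left, real_inner_smul_right, hvx]
    simp only [Real.norm_eq_abs]
    rw [mul_pow, mul_pow, sq_abs, sq_abs]
    ring
  have hkey : ‖α • v + ((α * (-2 / σ)) * p) • x‖ ^ 2 ≤ ‖v‖ ^ 2 := by
    rw [hns]
    exact quad α (α * (-2 / σ)) p (‖x‖ ^ 2) (‖v‖ ^ 2) hα2 hp2 (sq_nonneg _) h6
  calc ‖α • v + ((α * (-2 / σ)) * p) • x‖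
      = Real.sqrt (‖α • v + ((α * (-2 / σ)) * p) • x‖ ^ 2) := (Real.sqrt_sq (norm_nonneg _)).symm
  _ ≤ Real.sqrt (‖v‖ ^ 2) := Real.sqrt_le_sqrt hkey
  _ = ‖v‖ := Real.sqrt_sq (norm_nonneg _)


lemma kernel_hasFDerivAt (σ : ℝ) (x : E) :
    HasFDerivAt (fun y : E => Real.exp (-‖y‖ ^ 2 / σ))
      ((Real.exp (-‖x‖ ^ 2 / σ) * (-2 / σ)) • innerSL ℝ x) x := by
  have h1 : HasFDerivAt (fun y : E => ‖y‖ ^ 2) (2 • innerSL ℝ x) x :=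
    (hasStrictFDerivAt_norm_sq x).hasFDerivAt
  have h2 : HasFDerivAt (fun y : E => -‖y‖ ^ 2 / σ) ((-1/σ) • (2 • innerSL ℝ x)) x := by
    have := h1.const_mul (-1/σ)
    convert this using 1
    ext y; ring
    · rfl
    · funext y; ring
  have h3 := h2.exp
  convert h3 using 1
  ext v
  simp [smul_smul]
  ring


lemma vec_lip (σ : ℝ) (hσ : 0 < σ) (a b : E) :
    ‖Real.exp (-‖a‖ ^ 2 / σ) • a - Real.exp (-‖b‖ ^ 2 / σ) • b‖ ≤ ‖a - b‖ := by
  have H := convex_univ.norm_image_sub_le_of_norm_hasFDerivWithin_le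
    (f := fun y : E => Real.exp (-‖y‖ ^ 2 / σ) • y)
    (f' := fun x : E => Real.exp (-‖x‖ ^ 2 / σ) • ContinuousLinearMap.id ℝ E
      + ((Real.exp (-‖x‖ ^ 2 / σ) * (-2 / σ)) • innerSL ℝ x).smulRight x)
    (C := 1)
    (fun x _ => (((kernel_hasFDerivAt σ x).smul (hasFDerivAt_id x)).hasFDerivWithinAt))
    (fun x _ => ?_) (Set.mem_univ b) (Set.mem_univ a)
  · simpa using H
  · apply ContinuousLinearMap.opNorm_le_bound _ zero_le_one
    intro v
    rw [one_mul]
    have := opnorm_bound σ hσ x v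
    simpa [ContinuousLinearMap.smulRight_apply, ContinuousLinearMap.smul_apply,
      innerSL_apply_apply, smul_smul] using this

lemma ker_lip (σ : ℝ) (hσ : 0 < σ) (a b : E) :
    |Real.exp (-‖a‖ ^ 2 / σ) - Real.exp (-‖b‖ ^ 2 / σ)|
      ≤ Real.sqrt (2 / (σ * Real.exp 1)) * ‖a - b‖ := by
  have H := convex_univ.norm_image_sub_le_of_norm_hasFDerivWithin_le
    (f := fun y : E => Real.exp (-‖y‖ ^ 2 / σ))
    (f' := fun x : E => (Real.exp (-‖x‖ ^ 2 / σ) * (-2 / σ)) • innerSL ℝ x)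
    (C := Real.sqrt (2 / (σ * Real.exp 1)))
    (fun x _ => (kernel_hasFDerivAt σ x).hasFDerivWithinAt)
    (fun x _ => ?_) (Set.mem_univ b) (Set.mem_univ a)
  · simpa [Real.norm_eq_abs] using H
  · rw [norm_smul, innerSL_apply_norm, Real.norm_eq_abs, abs_mul]
    rw [abs_of_pos (Real.exp_pos _), abs_div, abs_neg, abs_of_pos hσ]
    calc Real.exp (-‖x‖ ^ 2 / σ) * (|2| / σ) * ‖x‖
        = 2 / σ * ‖x‖ * Real.exp (-‖x‖ ^ 2 / σ) := by rw [abs_two]; ring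
    _ ≤ _ := bnd' σ hσ ‖x‖ (norm_nonneg x)

end helpers

set_option maxHeartbeats 1000000

noncomputable def steinPhi {d : ℕ} (σ : ℝ) (V : EuclideanSpace ℝ (Fin d) → ℝ)
    (ρ : Measure (EuclideanSpace ℝ (Fin d))) (θ : EuclideanSpace ℝ (Fin d)) :
    EuclideanSpace ℝ (Fin d) :=
  ∫ θ', ((-Real.exp (-‖θ' - θ‖ ^ 2 / σ)) • gradient V θ'
      + ((2 / σ) * Real.exp (-‖θ' - θ‖ ^ 2 / σ)) • (θ - θ')) ∂ρ

/-- If `V` is `C¹` and `∫‖∇V‖ dρ < ∞`, then `φ[ρ]` is Lipschitz with constant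
`√(2/(σe)) * ∫‖∇V‖ dρ + 2/σ`. -/
theorem steinPhi_lipschitz (d : ℕ) (σ : ℝ) (hσ : 0 < σ)
    (V : EuclideanSpace ℝ (Fin d) → ℝ) (hV : ContDiff ℝ 1 V)
    (ρ : Measure (EuclideanSpace ℝ (Fin d))) [IsProbabilityMeasure ρ]
    (hInt : Integrable (fun θ' => ‖gradient V θ'‖) ρ) :
    LipschitzWith
      (Real.sqrt (2 / (σ * Real.exp 1)) * (∫ θ', ‖gradient V θ'‖ ∂ρ) + 2 / σ).toNNReal
      (steinPhi σ V ρ) := by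
  set s := Real.sqrt (2 / (σ * Real.exp 1)) with hs
  set I := ∫ θ', ‖gradient V θ'‖ ∂ρ with hI
  have hs0 : 0 ≤ s := Real.sqrt_nonneg _
  have hI0 : 0 ≤ I := integral_nonneg fun _ => norm_nonneg _
  have hC0 : 0 ≤ s * I + 2 / σ := by positivity
  -- continuity of the gradient
  have hgc : Continuous (gradient V) := by
    have h := hV.continuous_fderiv one_ne_zero
    exact (InnerProductSpace.toDual ℝ (EuclideanSpace ℝ (Fin d))).symm.continuous.comp h
  -- continuity of exp kernel in θ'
  have hker : ∀ θ : EuclideanSpace ℝ (Fin d), Continuous fun θ' : EuclideanSpace ℝ (Fin d) => Real.exp (-‖θ' - θ‖ ^ 2 / σ) := fun θ => by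
    continuity
  have hexp_le_one : ∀ (θ θ' : EuclideanSpace ℝ (Fin d)), Real.exp (-‖θ' - θ‖ ^ 2 / σ) ≤ 1 := fun θ θ' =>
    Real.exp_le_one_iff.mpr (div_nonpos_of_nonpos_of_nonneg (neg_nonpos.mpr (by positivity)) hσ.le)
  -- integrability of the two pieces
  have hI1 : ∀ θ : EuclideanSpace ℝ (Fin d), Integrable (fun θ' : EuclideanSpace ℝ (Fin d) =>
      (-Real.exp (-‖θ' - θ‖ ^ 2 / σ)) • gradient V θ') ρ := by
    intro θ
    apply Integrable.mono hInt
    · exact (((hker θ).neg).smul hgc).aestronglyMeasurable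
    · filter_upwards with θ'
      rw [norm_smul, Real.norm_eq_abs, abs_neg, abs_of_pos (Real.exp_pos _), Real.norm_eq_abs,
        abs_norm]
      exact mul_le_of_le_one_left (norm_nonneg _) (hexp_le_one θ θ')
  have hI2 : ∀ θ : EuclideanSpace ℝ (Fin d), Integrable (fun θ' : EuclideanSpace ℝ (Fin d) =>
      ((2 / σ) * Real.exp (-‖θ' - θ‖ ^ 2 / σ)) • (θ - θ')) ρ := by
    intro θ
    apply Integrable.mono (integrable_const s)
    · exact ((continuous_const.mul (hker θ)).smul
        (continuous_const.sub continuous_id)).aestronglyMeasurable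
    · filter_upwards with θ'
      rw [norm_smul, Real.norm_eq_abs, abs_mul, abs_of_pos (by positivity : (0:ℝ) < 2/σ),
        abs_of_pos (Real.exp_pos _), Real.norm_eq_abs, abs_of_nonneg hs0]
      calc 2 / σ * Real.exp (-‖θ' - θ‖ ^ 2 / σ) * ‖θ - θ'‖
          = 2 / σ * ‖θ' - θ‖ * Real.exp (-‖θ' - θ‖ ^ 2 / σ) := by
            rw [norm_sub_rev θ θ']; ring
      _ ≤ s := bnd' σ hσ ‖θ' - θ‖ (norm_nonneg _)
  -- pointwise Lipschitz estimate of the integrand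
  have hpt : ∀ (θ₁ θ₂ θ' : EuclideanSpace ℝ (Fin d)),
      ‖((-Real.exp (-‖θ' - θ₁‖ ^ 2 / σ)) • gradient V θ'
          + ((2 / σ) * Real.exp (-‖θ' - θ₁‖ ^ 2 / σ)) • (θ₁ - θ'))
        - ((-Real.exp (-‖θ' - θ₂‖ ^ 2 / σ)) • gradient V θ'
          + ((2 / σ) * Real.exp (-‖θ' - θ₂‖ ^ 2 / σ)) • (θ₂ - θ'))‖
      ≤ (s * ‖gradient V θ'‖ + 2 / σ) * ‖θ₁ - θ₂‖ := by
    intro θ₁ θ₂ θ'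
    set e₁ := Real.exp (-‖θ' - θ₁‖ ^ 2 / σ) with he₁
    set e₂ := Real.exp (-‖θ' - θ₂‖ ^ 2 / σ) with he₂
    have hsplit : ((-e₁) • gradient V θ' + ((2 / σ) * e₁) • (θ₁ - θ'))
        - ((-e₂) • gradient V θ' + ((2 / σ) * e₂) • (θ₂ - θ'))
        = (e₂ - e₁) • gradient V θ'
          + (2 / σ) • (e₁ • (θ₁ - θ') - e₂ • (θ₂ - θ')) := by
      module
    rw [hsplit]
    refine le_trans (norm_add_le _ _) ?_
    have h1 : ‖(e₂ - e₁) • gradient V θ'‖ ≤ s * ‖θ₁ - θ₂‖ * ‖gradient V θ'‖ := by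
      rw [norm_smul, Real.norm_eq_abs]
      apply mul_le_mul_of_nonneg_right _ (norm_nonneg _)
      have := ker_lip σ hσ (θ' - θ₂) (θ' - θ₁)
      rw [sub_sub_sub_cancel_left] at this
      exact this
    have h2 : ‖(2 / σ) • (e₁ • (θ₁ - θ') - e₂ • (θ₂ - θ'))‖ ≤ 2 / σ * ‖θ₁ - θ₂‖ := by
      rw [norm_smul, Real.norm_eq_abs, abs_of_pos (by positivity : (0:ℝ) < 2/σ)]
      apply mul_le_mul_of_nonneg_left _ (by positivity)
      have := vec_lip σ hσ (θ₁ - θ') (θ₂ - θ')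
      rw [sub_sub_sub_cancel_right] at this
      rw [he₁, he₂, norm_sub_rev θ' θ₁, norm_sub_rev θ' θ₂]
      exact this
    calc ‖(e₂ - e₁) • gradient V θ'‖ + ‖(2 / σ) • (e₁ • (θ₁ - θ') - e₂ • (θ₂ - θ'))‖
        ≤ s * ‖θ₁ - θ₂‖ * ‖gradient V θ'‖ + 2 / σ * ‖θ₁ - θ₂‖ := add_le_add h1 h2
    _ = (s * ‖gradient V θ'‖ + 2 / σ) * ‖θ₁ - θ₂‖ := by ring
  -- main estimate
  apply LipschitzWith.of_dist_le_mul
  intro θ₁ θ₂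
  rw [Real.coe_toNNReal _ hC0, dist_eq_norm, dist_eq_norm]
  have hsub : steinPhi σ V ρ θ₁ - steinPhi σ V ρ θ₂
      = ∫ θ', (((-Real.exp (-‖θ' - θ₁‖ ^ 2 / σ)) • gradient V θ'
          + ((2 / σ) * Real.exp (-‖θ' - θ₁‖ ^ 2 / σ)) • (θ₁ - θ'))
        - ((-Real.exp (-‖θ' - θ₂‖ ^ 2 / σ)) • gradient V θ'
          + ((2 / σ) * Real.exp (-‖θ' - θ₂‖ ^ 2 / σ)) • (θ₂ - θ'))) ∂ρ := by
    unfold steinPhi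
    exact (integral_sub ((hI1 θ₁).add (hI2 θ₁)) ((hI1 θ₂).add (hI2 θ₂))).symm
  rw [hsub]
  have hb : Integrable (fun θ' : EuclideanSpace ℝ (Fin d) => (s * ‖gradient V θ'‖ + 2 / σ) * ‖θ₁ - θ₂‖) ρ :=
    (((hInt.const_mul s).add (integrable_const _)).mul_const _)
  refine le_trans (norm_integral_le_of_norm_le hb ?_) ?_
  · filter_upwards with θ' using hpt θ₁ θ₂ θ'
  · rw [integral_mul_const, integral_add (hInt.const_mul s) (integrable_const _),
      integral_const_mul, integral_const]
    simp [measure_univ, hI]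
end

section
/- Fix σ > 0, let V : ℝ^d → ℝ be continuously differentiable with gradient ∇V satisfying ‖∇V(x)‖ ≤ b₁·(1 + ‖x‖) for all x, and let ρ be a probability measure on ℝ^d with ∫‖θ'‖ dρ(θ') < ∞. Then for every θ ∈ ℝ^d: ‖φ[ρ](θ)‖ ≤ b₁ + (b₁ + 2/σ)·∫‖θ'‖ dρ(θ') + (2/σ)·‖θ‖. -/
open MeasureTheory

/-- If `V` is `C¹` with `‖∇V(x)‖ ≤ b₁ (1 + ‖x‖)` and `∫‖θ'‖ dρ < ∞`, then for every `θ`,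
`‖φ[ρ](θ)‖ ≤ b₁ + (b₁ + 2/σ) ∫‖θ'‖ dρ + (2/σ) ‖θ‖`. -/
theorem steinPhi_norm_bound_linear_growth (d : ℕ) (σ : ℝ) (hσ : 0 < σ)
    (V : EuclideanSpace ℝ (Fin d) → ℝ) (hV : ContDiff ℝ 1 V) (b₁ : ℝ) (hb₁ : 0 < b₁)
    (hgrow : ∀ x : EuclideanSpace ℝ (Fin d), ‖gradient V x‖ ≤ b₁ * (1 + ‖x‖))
    (ρ : Measure (EuclideanSpace ℝ (Fin d))) [IsProbabilityMeasure ρ]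
    (hIntN : Integrable (fun θ' : EuclideanSpace ℝ (Fin d) => ‖θ'‖) ρ) :
    ∀ θ : EuclideanSpace ℝ (Fin d),
      ‖steinPhi σ V ρ θ‖ ≤
        b₁ + (b₁ + 2 / σ) * (∫ θ' : EuclideanSpace ℝ (Fin d), ‖θ'‖ ∂ρ)
          + (2 / σ) * ‖θ‖ := by
  intro θ
  set g : EuclideanSpace ℝ (Fin d) → ℝ :=
    fun θ' => (b₁ + (2 / σ) * ‖θ‖) + (b₁ + 2 / σ) * ‖θ'‖ with hg
  have hgInt : Integrable g ρ := (integrable_const _).add (hIntN.const_mul _)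
  have hσ' : 0 < 2 / σ := by positivity
  have hbound : ∀ θ' : EuclideanSpace ℝ (Fin d),
      ‖(-Real.exp (-‖θ' - θ‖ ^ 2 / σ)) • gradient V θ'
        + ((2 / σ) * Real.exp (-‖θ' - θ‖ ^ 2 / σ)) • (θ - θ')‖ ≤ g θ' := by
    intro θ'
    set e := Real.exp (-‖θ' - θ‖ ^ 2 / σ) with he
    have he0 : 0 ≤ e := Real.exp_nonneg _
    have he1 : e ≤ 1 := by
      rw [he]
      apply Real.exp_le_one_iff.mpr
      apply div_nonpos_of_nonpos_of_nonneg _ hσ.le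
      simp [sq_nonneg]
    have hA : ‖(-e) • gradient V θ'‖ ≤ b₁ * (1 + ‖θ'‖) := by
      rw [norm_smul, Real.norm_eq_abs, abs_neg, abs_of_nonneg he0]
      calc e * ‖gradient V θ'‖ ≤ 1 * (b₁ * (1 + ‖θ'‖)) := by
            apply mul_le_mul he1 (hgrow θ') (norm_nonneg _) zero_le_one
        _ = b₁ * (1 + ‖θ'‖) := one_mul _
    have hB : ‖((2 / σ) * e) • (θ - θ')‖ ≤ (2 / σ) * (‖θ‖ + ‖θ'‖) := by
      rw [norm_smul, Real.norm_eq_abs, abs_of_nonneg (by positivity)]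
      calc 2 / σ * e * ‖θ - θ'‖ = 2 / σ * (e * ‖θ - θ'‖) := by ring
        _ ≤ 2 / σ * (1 * (‖θ‖ + ‖θ'‖)) := by
            apply mul_le_mul_of_nonneg_left _ hσ'.le
            exact mul_le_mul he1 (norm_sub_le _ _) (norm_nonneg _) zero_le_one
        _ = 2 / σ * (‖θ‖ + ‖θ'‖) := by ring
    calc ‖(-e) • gradient V θ' + ((2 / σ) * e) • (θ - θ')‖
        ≤ ‖(-e) • gradient V θ'‖ + ‖((2 / σ) * e) • (θ - θ')‖ := norm_add_le _ _
      _ ≤ b₁ * (1 + ‖θ'‖) + (2 / σ) * (‖θ‖ + ‖θ'‖) := add_le_add hA hB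
      _ = g θ' := by simp only [hg]; ring
  have hmain : ‖steinPhi σ V ρ θ‖ ≤ ∫ θ', g θ' ∂ρ :=
    norm_integral_le_of_norm_le hgInt (Filter.Eventually.of_forall hbound)
  have hgint : ∫ θ', g θ' ∂ρ
      = (b₁ + (2 / σ) * ‖θ‖) + (b₁ + 2 / σ) * ∫ θ', ‖θ'‖ ∂ρ := by
    rw [integral_add (integrable_const _) (hIntN.const_mul _), integral_const_mul]
    simp
  rw [hgint] at hmain
  linarith
end

section
/- Fix σ > 0 and let V : ℝ^d → ℝ be continuously differentiable with gradient ∇V such that: θ ↦ exp(−V(θ)) is integrable with respect to Lebesgue measure, θ ↦ ‖∇V(θ)‖·exp(−V(θ)) is integrable, and exp(−V(θ)) → 0 as ‖θ‖ → ∞ (convergence along the cocompact filter). Then Stein's identity holds: for every θ' ∈ ℝ^d, ∫ ( −exp(−‖θ−θ'‖²/σ)·∇V(θ) + (2/σ)·exp(−‖θ−θ'‖²/σ)·(θ' − θ) ) · exp(−V(θ)) dθ = 0. -/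
open MeasureTheory Filter

section Aux

variable {d : ℕ}

local notation "E" => EuclideanSpace ℝ (Fin d)
local notation "⟪" x ", " y "⟫" => @inner ℝ _ _ x y

/-- The bound `r e^{-r²/σ} ≤ √σ` for `r ≥ 0`. -/
lemma rbf_aux_bound {σ : ℝ} (hσ : 0 < σ) {r : ℝ} (hr : 0 ≤ r) :
    r * Real.exp (-r ^ 2 / σ) ≤ Real.sqrt σ := by
  rcases le_total r (Real.sqrt σ) with h | h
  · calc r * Real.exp (-r ^ 2 / σ) ≤ r * 1 := by
          gcongr
          exact Real.exp_le_one_iff.2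
            (div_nonpos_of_nonpos_of_nonneg (neg_nonpos.2 (by positivity)) hσ.le)
    _ = r := mul_one r
    _ ≤ Real.sqrt σ := h
  · have hrpos : 0 < r := lt_of_lt_of_le (Real.sqrt_pos.2 hσ) h
    have h1 : r ^ 2 / σ ≤ Real.exp (r ^ 2 / σ) := (Real.add_one_le_exp _).trans' (by linarith)
    have h2 : Real.exp (-r ^ 2 / σ) ≤ σ / r ^ 2 := by
      rw [neg_div, Real.exp_neg, inv_le_comm₀ (Real.exp_pos _) (by positivity)]
      calc (σ / r ^ 2)⁻¹ = r ^ 2 / σ := by rw [inv_div]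
        _ ≤ Real.exp (r ^ 2 / σ) := h1
    calc r * Real.exp (-r ^ 2 / σ) ≤ r * (σ / r ^ 2) := by gcongr
      _ = σ / r := by field_simp
      _ ≤ σ / Real.sqrt σ := by gcongr
      _ = Real.sqrt σ := Real.div_sqrt

end Aux

/-- Stein's identity for the RBF kernel: if `exp(-V)` and `‖∇V‖ exp(-V)` are Lebesgue
integrable and `exp(-V(θ)) → 0` as `‖θ‖ → ∞`, then for every `θ'`,
`∫ (-K(θ,θ') ∇V(θ) + ∇₁K(θ,θ')) exp(-V(θ)) dθ = 0`. -/
theorem stein_identity (d : ℕ) (σ : ℝ) (hσ : 0 < σ)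
    (V : EuclideanSpace ℝ (Fin d) → ℝ) (hV : ContDiff ℝ 1 V)
    (hInt : Integrable (fun θ => Real.exp (-V θ))
      (volume : Measure (EuclideanSpace ℝ (Fin d))))
    (hIntGrad : Integrable (fun θ => ‖gradient V θ‖ * Real.exp (-V θ))
      (volume : Measure (EuclideanSpace ℝ (Fin d))))
    (hlim : Tendsto (fun θ => Real.exp (-V θ))
      (cocompact (EuclideanSpace ℝ (Fin d))) (nhds 0)) :
    ∀ θ' : EuclideanSpace ℝ (Fin d),
      ∫ θ, Real.exp (-V θ) •
          ((-Real.exp (-‖θ - θ'‖ ^ 2 / σ)) • gradient V θ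
            + ((2 / σ) * Real.exp (-‖θ - θ'‖ ^ 2 / σ)) • (θ' - θ))
        ∂(volume : Measure (EuclideanSpace ℝ (Fin d))) = 0 := by
  intro θ'
  set K : EuclideanSpace ℝ (Fin d) → ℝ := fun θ => Real.exp (-‖θ - θ'‖ ^ 2 / σ) with hKdef
  have hVd : Differentiable ℝ V := hV.differentiable one_ne_zero
  -- derivative of `exp (-V)`
  have hE : ∀ θ : EuclideanSpace ℝ (Fin d), HasFDerivAt (fun θ => Real.exp (-V θ))
      (Real.exp (-V θ) • (-fderiv ℝ V θ)) θ := fun θ =>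
    ((hVd θ).hasFDerivAt.neg).exp
  -- derivative of `K`
  have hK : ∀ θ : EuclideanSpace ℝ (Fin d),
      HasFDerivAt K (((2 / σ) * K θ) • (innerSL ℝ (θ' - θ))) θ := by
    intro θ
    have hsub : HasFDerivAt (fun θ : EuclideanSpace ℝ (Fin d) => θ - θ')
        (ContinuousLinearMap.id ℝ (EuclideanSpace ℝ (Fin d))) θ :=
      (hasFDerivAt_id θ).sub_const θ'
    have h := ((hsub.inner ℝ hsub).const_mul (-σ⁻¹)).exp
    have hfun : (fun θ : EuclideanSpace ℝ (Fin d) =>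
        Real.exp ((-σ⁻¹) * (inner ℝ (θ - θ') (θ - θ') : ℝ))) = K := by
      funext θ
      rw [hKdef]
      congr 1
      rw [real_inner_self_eq_norm_sq]
      ring
    rw [hfun] at h
    refine h.congr_fderiv ?_
    ext v
    simp only [hKdef, ContinuousLinearMap.coe_smul', Pi.smul_apply, innerSL_apply_apply,
      ContinuousLinearMap.coe_comp', Function.comp_apply, ContinuousLinearMap.prod_apply,
      ContinuousLinearMap.coe_id', id_eq, fderivInnerCLM_apply, smul_eq_mul,
      real_inner_self_eq_norm_sq]
    have harg : -σ⁻¹ * ‖θ - θ'‖ ^ 2 = -‖θ - θ'‖ ^ 2 / σ := by ring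
    rw [harg]
    simp only [inner_sub_left, inner_sub_right]
    rw [real_inner_comm v θ, real_inner_comm v θ']
    ring
  have hKdiff : Differentiable ℝ K := fun θ => (hK θ).differentiableAt
  have hEdiff : Differentiable ℝ (fun θ : EuclideanSpace ℝ (Fin d) => Real.exp (-V θ)) :=
    fun θ => (hE θ).differentiableAt
  -- basic facts on `K`
  have hKpos : ∀ θ : EuclideanSpace ℝ (Fin d), 0 < K θ := fun θ => Real.exp_pos _
  have hKle : ∀ θ : EuclideanSpace ℝ (Fin d), K θ ≤ 1 := fun θ =>
    Real.exp_le_one_iff.2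
      (div_nonpos_of_nonpos_of_nonneg (neg_nonpos.2 (by positivity)) hσ.le)
  have hKbound : ∀ θ : EuclideanSpace ℝ (Fin d), K θ * ‖θ' - θ‖ ≤ Real.sqrt σ := by
    intro θ
    have h := rbf_aux_bound hσ (norm_nonneg (θ - θ'))
    rw [norm_sub_rev θ' θ]
    calc K θ * ‖θ - θ'‖ = ‖θ - θ'‖ * Real.exp (-‖θ - θ'‖ ^ 2 / σ) := by rw [hKdef]; ring
      _ ≤ Real.sqrt σ := h
  -- continuity facts
  have hcont_exp : Continuous fun θ : EuclideanSpace ℝ (Fin d) => Real.exp (-V θ) :=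
    Real.continuous_exp.comp hV.continuous.neg
  have hKcont : Continuous K := by
    apply Real.continuous_exp.comp
    fun_prop
  have hgrad_cont : Continuous (fun θ : EuclideanSpace ℝ (Fin d) => gradient V θ) := by
    have h : Continuous (fderiv ℝ V) := hV.continuous_fderiv one_ne_zero
    exact (InnerProductSpace.toDual ℝ (EuclideanSpace ℝ (Fin d))).symm.continuous.comp h
  have hgrad_inner : ∀ (θ v : EuclideanSpace ℝ (Fin d)),
      (inner ℝ (gradient V θ) v : ℝ) = fderiv ℝ V θ v := by
    intro θ v
    simp [gradient, InnerProductSpace.toDual_symm_apply]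
  -- the integrand
  set F : EuclideanSpace ℝ (Fin d) → EuclideanSpace ℝ (Fin d) := fun θ => Real.exp (-V θ) •
      ((-K θ) • gradient V θ + ((2 / σ) * K θ) • (θ' - θ)) with hFdef
  have hFcont : Continuous F :=
    hcont_exp.smul ((hKcont.neg.smul hgrad_cont).add
      ((continuous_const.mul hKcont).smul (continuous_const.sub continuous_id)))
  have hFint : Integrable F volume := by
    apply Integrable.mono' (hIntGrad.add (hInt.const_mul ((2 / σ) * Real.sqrt σ)))
      hFcont.aestronglyMeasurable
    filter_upwards with θ
    rw [hFdef]
    simp only [norm_smul, Real.norm_eq_abs, abs_of_pos (Real.exp_pos _)]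
    calc Real.exp (-V θ) * ‖(-K θ) • gradient V θ + ((2 / σ) * K θ) • (θ' - θ)‖
        ≤ Real.exp (-V θ) * (‖(-K θ) • gradient V θ‖ + ‖((2 / σ) * K θ) • (θ' - θ)‖) := by
          gcongr; exact norm_add_le _ _
      _ ≤ Real.exp (-V θ) * (‖gradient V θ‖ + (2 / σ) * Real.sqrt σ) := by
          gcongr
          · rw [norm_smul, Real.norm_eq_abs, abs_neg, abs_of_pos (hKpos θ)]
            calc K θ * ‖gradient V θ‖ ≤ 1 * ‖gradient V θ‖ := by gcongr; exact hKle θ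
              _ = ‖gradient V θ‖ := one_mul _
          · rw [norm_smul, Real.norm_eq_abs, abs_mul,
              abs_of_pos (by positivity : (0:ℝ) < 2 / σ), abs_of_pos (hKpos θ), mul_assoc]
            gcongr
            exact hKbound θ
      _ = ‖gradient V θ‖ * Real.exp (-V θ) + (2 / σ) * Real.sqrt σ * Real.exp (-V θ) := by ring
  -- it suffices to test against every vector
  suffices h : ∀ v : EuclideanSpace ℝ (Fin d), (inner ℝ v (∫ θ, F θ) : ℝ) = 0 by
    have h2 := h (∫ θ, F θ)
    rw [inner_self_eq_zero] at h2
    exact h2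
  intro v
  -- auxiliary pointwise functions
  set A : EuclideanSpace ℝ (Fin d) → ℝ :=
    fun θ => K θ * (Real.exp (-V θ) * (-(inner ℝ (gradient V θ) v : ℝ))) with hAdef
  set B : EuclideanSpace ℝ (Fin d) → ℝ :=
    fun θ => ((2 / σ) * K θ * (inner ℝ (θ' - θ) v : ℝ)) * Real.exp (-V θ) with hBdef
  have hAeq : ∀ θ, A θ = K θ * fderiv ℝ (fun θ => Real.exp (-V θ)) θ v := by
    intro θ
    rw [hAdef, (hE θ).fderiv]
    simp [hgrad_inner]
  have hBeq : ∀ θ, B θ = fderiv ℝ K θ v * Real.exp (-V θ) := by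
    intro θ
    rw [hBdef, (hK θ).fderiv]
    simp only [ContinuousLinearMap.coe_smul', Pi.smul_apply, innerSL_apply_apply, smul_eq_mul]
  -- integrability of the pieces
  have hAcont : Continuous A :=
    hKcont.mul (hcont_exp.mul (hgrad_cont.inner continuous_const).neg)
  have hBcont : Continuous B :=
    ((continuous_const.mul hKcont).mul
      ((continuous_const.sub continuous_id).inner continuous_const)).mul hcont_exp
  have hAint : Integrable A volume := by
    apply Integrable.mono' (hIntGrad.const_mul ‖v‖) hAcont.aestronglyMeasurable
    filter_upwards with θ
    rw [hAdef]
    simp only [Real.norm_eq_abs, abs_mul, abs_neg, abs_of_pos (hKpos θ),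
      abs_of_pos (Real.exp_pos _)]
    calc K θ * (Real.exp (-V θ) * |(inner ℝ (gradient V θ) v : ℝ)|)
        ≤ 1 * (Real.exp (-V θ) * (‖gradient V θ‖ * ‖v‖)) := by
          gcongr
          · exact hKle θ
          · exact abs_real_inner_le_norm _ _
      _ = ‖v‖ * (‖gradient V θ‖ * Real.exp (-V θ)) := by ring
  have hBint : Integrable B volume := by
    apply Integrable.mono' (hInt.const_mul ((2 / σ) * Real.sqrt σ * ‖v‖))
      hBcont.aestronglyMeasurable
    filter_upwards with θ
    rw [hBdef]
    simp only [Real.norm_eq_abs, abs_mul, abs_of_pos (hKpos θ), abs_of_pos (Real.exp_pos _),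
      abs_of_pos (by positivity : (0:ℝ) < 2 / σ)]
    calc 2 / σ * K θ * |(inner ℝ (θ' - θ) v : ℝ)| * Real.exp (-V θ)
        ≤ 2 / σ * K θ * (‖θ' - θ‖ * ‖v‖) * Real.exp (-V θ) := by
          gcongr
          exact abs_real_inner_le_norm _ _
      _ = 2 / σ * (K θ * ‖θ' - θ‖) * ‖v‖ * Real.exp (-V θ) := by ring
      _ ≤ 2 / σ * Real.sqrt σ * ‖v‖ * Real.exp (-V θ) := by
          gcongr
          exact hKbound θ
  have hKEint : Integrable (fun θ => K θ * Real.exp (-V θ)) volume := by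
    apply Integrable.mono' hInt (hKcont.mul hcont_exp).aestronglyMeasurable
    filter_upwards with θ
    rw [Real.norm_eq_abs, Pi.mul_apply, abs_mul, abs_of_pos (hKpos θ), abs_of_pos (Real.exp_pos _)]
    calc K θ * Real.exp (-V θ) ≤ 1 * Real.exp (-V θ) := by gcongr; exact hKle θ
      _ = Real.exp (-V θ) := one_mul _
  -- integration by parts
  have hibp := integral_mul_fderiv_eq_neg_fderiv_mul_of_integrable
    (μ := (volume : Measure (EuclideanSpace ℝ (Fin d)))) (f := K)
    (g := fun θ => Real.exp (-V θ)) (v := v)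
    (hBint.congr (Filter.Eventually.of_forall fun θ => (hBeq θ)))
    (hAint.congr (Filter.Eventually.of_forall fun θ => (hAeq θ)))
    hKEint (fun x _ => hKdiff x) (fun x _ => hEdiff x)
  -- putting everything together
  have hinner : (inner ℝ v (∫ θ, F θ) : ℝ) = ∫ θ, (inner ℝ v (F θ) : ℝ) :=
    (integral_inner hFint v).symm
  have hpt : ∀ θ, (inner ℝ v (F θ) : ℝ) = A θ + B θ := by
    intro θ
    rw [hFdef, hAdef, hBdef]
    simp only [inner_smul_right, inner_add_right]
    rw [real_inner_comm v (gradient V θ), real_inner_comm v (θ' - θ)]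
    ring
  rw [hinner]
  calc ∫ θ, (inner ℝ v (F θ) : ℝ) = ∫ θ, (A θ + B θ) :=
        integral_congr_ae (Filter.Eventually.of_forall hpt)
    _ = (∫ θ, A θ) + ∫ θ, B θ := integral_add hAint hBint
    _ = (∫ θ, K θ * fderiv ℝ (fun θ => Real.exp (-V θ)) θ v)
        + ∫ θ, fderiv ℝ K θ v * Real.exp (-V θ) := by
        rw [integral_congr_ae (Filter.Eventually.of_forall hAeq),
          integral_congr_ae (Filter.Eventually.of_forall hBeq)]
    _ = 0 := by rw [hibp]; ring
end

section
/- Let (Ω, P) be a probability space and θ, e : Ω → ℝ^d random vectors with E‖θ‖² < ∞, E‖e‖² < ∞, E[e] = 0, and θ independent of e. Let V : ℝ^d → ℝ be continuously differentiable with gradient ∇V satisfying, for all x: ⟨x, −∇V(x)⟩ ≤ b₁ − a₁·‖x‖² and ‖∇V(x)‖² ≤ b₁·(1 + ‖x‖²). Then for every η ≥ 0: E‖θ − η·∇V(θ) + √(2η)·e‖² ≤ (1 − 2η·a₁ + η²·b₁)·E‖θ‖² + η²·b₁ + 2η·b₁ + 2η·E‖e‖². -/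
open MeasureTheory ProbabilityTheory RealInnerProductSpace

/-- One-step second-moment recursion for the Langevin update: if `θ`, `e` are square-integrable
random vectors with `E[e] = 0`, `θ` independent of `e`, and `V` is `C¹`, dissipative and with
quadratic gradient growth, then for every `η ≥ 0`,
`E‖θ - η∇V(θ) + √(2η) e‖² ≤ (1 - 2ηa₁ + η²b₁) E‖θ‖² + η²b₁ + 2ηb₁ + 2η E‖e‖²`. -/
theorem langevin_one_step_moment_bound (d : ℕ)
    (Ω : Type*) [MeasurableSpace Ω] (P : Measure Ω) [IsProbabilityMeasure P]
    (θ e : Ω → EuclideanSpace ℝ (Fin d)) (hθm : Measurable θ) (hem : Measurable e)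
    (hθ2 : Integrable (fun ω => ‖θ ω‖ ^ 2) P) (he2 : Integrable (fun ω => ‖e ω‖ ^ 2) P)
    (hmean : ∫ ω, e ω ∂P = 0) (hindep : IndepFun θ e P)
    (V : EuclideanSpace ℝ (Fin d) → ℝ) (hV : ContDiff ℝ 1 V) (a₁ b₁ : ℝ)
    (ha₁ : 0 < a₁) (hb₁ : 0 < b₁)
    (hdis : ∀ x : EuclideanSpace ℝ (Fin d), ⟪x, -gradient V x⟫ ≤ b₁ - a₁ * ‖x‖ ^ 2)
    (hgrow : ∀ x : EuclideanSpace ℝ (Fin d), ‖gradient V x‖ ^ 2 ≤ b₁ * (1 + ‖x‖ ^ 2)) :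
    ∀ (η : ℝ), 0 ≤ η →
      ∫ ω, ‖θ ω - η • gradient V (θ ω) + Real.sqrt (2 * η) • e ω‖ ^ 2 ∂P ≤
        (1 - 2 * η * a₁ + η ^ 2 * b₁) * (∫ ω, ‖θ ω‖ ^ 2 ∂P)
          + η ^ 2 * b₁ + 2 * η * b₁ + 2 * η * (∫ ω, ‖e ω‖ ^ 2 ∂P) := by
  intro η hη
  classical
  have hgc : Continuous (gradient V) := by
    have h1 : Continuous (fderiv ℝ V) := hV.continuous_fderiv (by simp)
    exact (InnerProductSpace.toDual ℝ _).symm.continuous.comp h1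
  set G : EuclideanSpace ℝ (Fin d) → EuclideanSpace ℝ (Fin d) :=
    fun x => x - η • gradient V x with hGdef
  have hGc : Continuous G := continuous_id.sub (hgc.const_smul η)
  set B : ℝ := 1 - 2 * η * a₁ + η ^ 2 * b₁ with hB
  set C : ℝ := η ^ 2 * b₁ + 2 * η * b₁ with hC
  have hCnn : 0 ≤ C := by rw [hC]; positivity
  -- pointwise bound on ‖G x‖²
  have hGbound : ∀ x : EuclideanSpace ℝ (Fin d), ‖G x‖ ^ 2 ≤ B * ‖x‖ ^ 2 + C := by
    intro x
    have h1 : -⟪x, gradient V x⟫ ≤ b₁ - a₁ * ‖x‖ ^ 2 := by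
      simpa [inner_neg_right] using hdis x
    have h2 := hgrow x
    have h3 : ‖G x‖ ^ 2
        = ‖x‖ ^ 2 - 2 * (η * ⟪x, gradient V x⟫) + η ^ 2 * ‖gradient V x‖ ^ 2 := by
      rw [hGdef]
      rw [norm_sub_sq_real, real_inner_smul_right, norm_smul, Real.norm_eq_abs,
        mul_pow, sq_abs]
    have h4 : 2 * η * (-⟪x, gradient V x⟫) ≤ 2 * η * (b₁ - a₁ * ‖x‖ ^ 2) :=
      mul_le_mul_of_nonneg_left h1 (by linarith)
    have h5 : η ^ 2 * ‖gradient V x‖ ^ 2 ≤ η ^ 2 * (b₁ * (1 + ‖x‖ ^ 2)) :=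
      mul_le_mul_of_nonneg_left h2 (sq_nonneg η)
    rw [h3, hB, hC]; nlinarith
  -- basic integrability
  have hθInt : Integrable θ P := by
    refine Integrable.mono' ((integrable_const (1:ℝ)).add hθ2) hθm.aestronglyMeasurable ?_
    filter_upwards with ω
    have h := norm_nonneg (θ ω)
    simp only [Pi.add_apply]
    nlinarith [sq_nonneg (‖θ ω‖ - 1)]
  have heInt : Integrable e P := by
    refine Integrable.mono' ((integrable_const (1:ℝ)).add he2) hem.aestronglyMeasurable ?_
    filter_upwards with ω
    have h := norm_nonneg (e ω)
    simp only [Pi.add_apply]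
    nlinarith [sq_nonneg (‖e ω‖ - 1)]
  have hGθm : Measurable (fun ω => G (θ ω)) := hGc.measurable.comp hθm
  have hGθ2 : Integrable (fun ω => ‖G (θ ω)‖ ^ 2) P := by
    refine Integrable.mono' ((hθ2.const_mul |B|).add (integrable_const C))
      ((hGθm.norm.pow_const 2).aestronglyMeasurable) ?_
    filter_upwards with ω
    have h1 := hGbound (θ ω)
    have h2 : B * ‖θ ω‖ ^ 2 ≤ |B| * ‖θ ω‖ ^ 2 :=
      mul_le_mul_of_nonneg_right (le_abs_self B) (sq_nonneg _)
    have h3 : (0:ℝ) ≤ ‖G (θ ω)‖ ^ 2 := sq_nonneg _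
    simp only [Pi.add_apply]
    rw [Real.norm_eq_abs, abs_of_nonneg h3]
    linarith
  have hGθInt : Integrable (fun ω => G (θ ω)) P := by
    refine Integrable.mono'
      ((integrable_const (1:ℝ)).add ((hθ2.const_mul |B|).add (integrable_const C)))
      hGθm.aestronglyMeasurable ?_
    filter_upwards with ω
    have h1 := hGbound (θ ω)
    have h2 : B * ‖θ ω‖ ^ 2 ≤ |B| * ‖θ ω‖ ^ 2 :=
      mul_le_mul_of_nonneg_right (le_abs_self B) (sq_nonneg _)
    have h4 := norm_nonneg (G (θ ω))
    simp only [Pi.add_apply]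
    nlinarith [sq_nonneg (‖G (θ ω)‖ - 1)]
  -- components
  have hGi : ∀ i : Fin d, Integrable (fun ω => (G (θ ω)) i) P := fun i =>
    (EuclideanSpace.proj (𝕜 := ℝ) i).integrable_comp hGθInt
  have hei : ∀ i : Fin d, Integrable (fun ω => (e ω) i) P := fun i =>
    (EuclideanSpace.proj (𝕜 := ℝ) i).integrable_comp heInt
  have hind : ∀ i : Fin d,
      IndepFun (fun ω => (G (θ ω)) i) (fun ω => (e ω) i) P := by
    intro i
    exact hindep.comp (((EuclideanSpace.proj (𝕜 := ℝ) i).continuous.comp hGc).measurable)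
      ((EuclideanSpace.proj (𝕜 := ℝ) i).continuous.measurable)
  have heimean : ∀ i : Fin d, ∫ ω, (e ω) i ∂P = 0 := by
    intro i
    have := (EuclideanSpace.proj (𝕜 := ℝ) i).integral_comp_comm heInt
    simpa [hmean] using this
  have hprodInt : ∀ i : Fin d, Integrable (fun ω => (G (θ ω)) i * (e ω) i) P := by
    intro i
    exact (hind i).integrable_mul (hGi i) (hei i)
  have hinnerInt : Integrable (fun ω => ⟪G (θ ω), e ω⟫) P := by
    have : ∀ ω, ⟪G (θ ω), e ω⟫ = ∑ i : Fin d, (G (θ ω)) i * (e ω) i := by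
      intro ω
      simp [PiLp.inner_apply, RCLike.inner_apply, mul_comm]
    simp_rw [this]
    exact integrable_finset_sum _ fun i _ => hprodInt i
  have hcross : ∫ ω, ⟪G (θ ω), e ω⟫ ∂P = 0 := by
    have h1 : ∀ ω, ⟪G (θ ω), e ω⟫ = ∑ i : Fin d, (G (θ ω)) i * (e ω) i := by
      intro ω
      simp [PiLp.inner_apply, RCLike.inner_apply, mul_comm]
    simp_rw [h1]
    rw [integral_finset_sum _ fun i _ => hprodInt i]
    refine Finset.sum_eq_zero fun i _ => ?_
    have h2 := (hind i).integral_fun_mul_eq_mul_integral (hGi i).aestronglyMeasurable (hei i).aestronglyMeasurable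
    have h3 : ∫ ω, (fun ω => (G (θ ω)) i * (e ω) i) ω ∂P
        = (∫ ω, (G (θ ω)) i ∂P) * ∫ ω, (e ω) i ∂P := h2
    simpa [heimean i] using h3
  -- expand the square pointwise
  have hexp : ∀ ω, ‖θ ω - η • gradient V (θ ω) + Real.sqrt (2 * η) • e ω‖ ^ 2
      = ‖G (θ ω)‖ ^ 2 + 2 * (Real.sqrt (2 * η) * ⟪G (θ ω), e ω⟫)
        + (2 * η) * ‖e ω‖ ^ 2 := by
    intro ω
    have h0 : θ ω - η • gradient V (θ ω) = G (θ ω) := rfl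
    rw [h0, norm_add_sq_real, real_inner_smul_right, norm_smul, Real.norm_eq_abs,
      mul_pow, sq_abs, Real.sq_sqrt (by linarith : (0:ℝ) ≤ 2 * η)]
  have he2' : Integrable (fun ω => (2 * η) * ‖e ω‖ ^ 2) P := he2.const_mul _
  have hmid : Integrable (fun ω => 2 * (Real.sqrt (2 * η) * ⟪G (θ ω), e ω⟫)) P :=
    (hinnerInt.const_mul _).const_mul 2
  have hsplit : ∫ ω, ‖θ ω - η • gradient V (θ ω) + Real.sqrt (2 * η) • e ω‖ ^ 2 ∂P
      = (∫ ω, ‖G (θ ω)‖ ^ 2 ∂P)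
        + 2 * Real.sqrt (2 * η) * (∫ ω, ⟪G (θ ω), e ω⟫ ∂P)
        + (2 * η) * ∫ ω, ‖e ω‖ ^ 2 ∂P := by
    have hfg : Integrable
        (fun ω => ‖G (θ ω)‖ ^ 2 + 2 * (Real.sqrt (2 * η) * ⟪G (θ ω), e ω⟫)) P :=
      hGθ2.add hmid
    simp_rw [hexp]
    rw [integral_add hfg he2', integral_add hGθ2 hmid, integral_const_mul,
      integral_const_mul, integral_const_mul]
    ring
  have hmain : ∫ ω, ‖G (θ ω)‖ ^ 2 ∂P ≤ B * (∫ ω, ‖θ ω‖ ^ 2 ∂P) + C := by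
    have h1 : ∫ ω, ‖G (θ ω)‖ ^ 2 ∂P ≤ ∫ ω, (B * ‖θ ω‖ ^ 2 + C) ∂P :=
      integral_mono hGθ2 ((hθ2.const_mul B).add (integrable_const C))
        (fun ω => hGbound (θ ω))
    have h2 : ∫ ω, (B * ‖θ ω‖ ^ 2 + C) ∂P = B * (∫ ω, ‖θ ω‖ ^ 2 ∂P) + C := by
      rw [integral_add (hθ2.const_mul B) (integrable_const C), integral_const_mul,
        integral_const]
      simp
    linarith
  rw [hsplit, hcross, mul_zero]
  have hCeq : C = η ^ 2 * b₁ + 2 * η * b₁ := hC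
  linarith [hmain, hCeq]
end

section
/- Fix σ > 0 and α ≥ 0. Let V : ℝ^d → ℝ be continuously differentiable with gradient ∇V satisfying, for all x: ⟨x, −∇V(x)⟩ ≤ b₁ − a₁·‖x‖² and ‖∇V(x)‖ ≤ b₁·(1 + ‖x‖), where a₁, b₁ > 0. Let U ≥ 0 and let μ, ρ be probability measures on ℝ^d with ∫‖x‖² dμ(x) = U² and ∫‖x‖² dρ(x) ≤ U² (both finite). Then ∫ ⟨x, −∇V(x) + α·φ[ρ](x)⟩ dμ(x) ≤ b₁·(1 + α) − (a₁ − α·(2b₁ + 4/σ))·U². -/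
open MeasureTheory RealInnerProductSpace

set_option maxHeartbeats 1000000 in
/-- Expected-drift dissipativity estimate for the Stein self-repulsive drift `-∇V + α φ[ρ]`:
if `∫‖x‖² dμ = U²` and `∫‖x‖² dρ ≤ U²`, then
`∫ ⟪x, -∇V(x) + α φ[ρ](x)⟫ dμ ≤ b₁(1 + α) - (a₁ - α(2b₁ + 4/σ)) U²`. -/
theorem stein_drift_dissipativity (d : ℕ) (σ : ℝ) (hσ : 0 < σ) (α : ℝ) (hα : 0 ≤ α)
    (V : EuclideanSpace ℝ (Fin d) → ℝ) (hV : ContDiff ℝ 1 V) (a₁ b₁ : ℝ)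
    (ha₁ : 0 < a₁) (hb₁ : 0 < b₁)
    (hdis : ∀ x : EuclideanSpace ℝ (Fin d), ⟪x, -gradient V x⟫ ≤ b₁ - a₁ * ‖x‖ ^ 2)
    (hgrow : ∀ x : EuclideanSpace ℝ (Fin d), ‖gradient V x‖ ≤ b₁ * (1 + ‖x‖))
    (U : ℝ) (hU : 0 ≤ U)
    (μ ρ : Measure (EuclideanSpace ℝ (Fin d)))
    [IsProbabilityMeasure μ] [IsProbabilityMeasure ρ]
    (hμ2 : Integrable (fun x : EuclideanSpace ℝ (Fin d) => ‖x‖ ^ 2) μ)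
    (hρ2 : Integrable (fun x : EuclideanSpace ℝ (Fin d) => ‖x‖ ^ 2) ρ)
    (hμU : ∫ x : EuclideanSpace ℝ (Fin d), ‖x‖ ^ 2 ∂μ = U ^ 2)
    (hρU : ∫ x : EuclideanSpace ℝ (Fin d), ‖x‖ ^ 2 ∂ρ ≤ U ^ 2) :
    ∫ x, ⟪x, -gradient V x + α • steinPhi σ V ρ x⟫ ∂μ ≤
      b₁ * (1 + α) - (a₁ - α * (2 * b₁ + 4 / σ)) * U ^ 2 := by
  -- continuity of the gradient
  have hGcont : Continuous (gradient V) := by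
    have h1 : Continuous (fderiv ℝ V) := hV.continuous_fderiv one_ne_zero
    exact (InnerProductSpace.toDual ℝ (EuclideanSpace ℝ (Fin d))).symm.continuous.comp h1
  -- the integrand of the Stein velocity field
  set f : EuclideanSpace ℝ (Fin d) → EuclideanSpace ℝ (Fin d) → EuclideanSpace ℝ (Fin d) := fun x θ' =>
    (-Real.exp (-‖θ' - x‖ ^ 2 / σ)) • gradient V θ'
      + ((2 / σ) * Real.exp (-‖θ' - x‖ ^ 2 / σ)) • (x - θ') with hf
  have hphi : ∀ x : EuclideanSpace ℝ (Fin d), steinPhi σ V ρ x = ∫ θ', f x θ' ∂ρ := fun x => rfl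
  -- basic exponential bounds
  have hexp_pos : ∀ x θ' : EuclideanSpace ℝ (Fin d), 0 < Real.exp (-‖θ' - x‖ ^ 2 / σ) := fun _ _ => Real.exp_pos _
  have hexp_le : ∀ x θ' : EuclideanSpace ℝ (Fin d), Real.exp (-‖θ' - x‖ ^ 2 / σ) ≤ 1 := by
    intro x θ'
    apply Real.exp_le_one_iff.mpr
    apply div_nonpos_of_nonpos_of_nonneg
    · simpa using sq_nonneg ‖θ' - x‖
    · exact hσ.le
  -- norm bound on the integrand
  have hnormf : ∀ x θ' : EuclideanSpace ℝ (Fin d),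
      ‖f x θ'‖ ≤ (b₁ + (2 / σ) * ‖x‖) + (b₁ + 2 / σ) * ‖θ'‖ := by
    intro x θ'
    have he := hexp_le x θ'
    have hep := (hexp_pos x θ').le
    have h1 : ‖(-Real.exp (-‖θ' - x‖ ^ 2 / σ)) • gradient V θ'‖ ≤ b₁ * (1 + ‖θ'‖) := by
      rw [norm_smul, Real.norm_eq_abs, abs_neg, abs_of_nonneg hep]
      calc Real.exp (-‖θ' - x‖ ^ 2 / σ) * ‖gradient V θ'‖
          ≤ 1 * ‖gradient V θ'‖ := by
            exact mul_le_mul_of_nonneg_right he (norm_nonneg _)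
        _ = ‖gradient V θ'‖ := one_mul _
        _ ≤ b₁ * (1 + ‖θ'‖) := hgrow θ'
    have h2 : ‖((2 / σ) * Real.exp (-‖θ' - x‖ ^ 2 / σ)) • (x - θ')‖
        ≤ (2 / σ) * (‖x‖ + ‖θ'‖) := by
      rw [norm_smul, Real.norm_eq_abs]
      have hσ' : (0:ℝ) ≤ 2 / σ := by positivity
      rw [abs_of_nonneg (mul_nonneg hσ' hep)]
      have hxa : ‖x - θ'‖ ≤ ‖x‖ + ‖θ'‖ := norm_sub_le _ _
      calc (2 / σ) * Real.exp (-‖θ' - x‖ ^ 2 / σ) * ‖x - θ'‖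
          ≤ (2 / σ) * 1 * (‖x‖ + ‖θ'‖) := by
            apply mul_le_mul _ hxa (norm_nonneg _) (by positivity)
            exact mul_le_mul_of_nonneg_left he hσ'
        _ = (2 / σ) * (‖x‖ + ‖θ'‖) := by ring
    calc ‖f x θ'‖ ≤ ‖(-Real.exp (-‖θ' - x‖ ^ 2 / σ)) • gradient V θ'‖
          + ‖((2 / σ) * Real.exp (-‖θ' - x‖ ^ 2 / σ)) • (x - θ')‖ := norm_add_le _ _
      _ ≤ b₁ * (1 + ‖θ'‖) + (2 / σ) * (‖x‖ + ‖θ'‖) := add_le_add h1 h2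
      _ = (b₁ + (2 / σ) * ‖x‖) + (b₁ + 2 / σ) * ‖θ'‖ := by ring
  -- continuity of the integrand
  have hec : ∀ x : EuclideanSpace ℝ (Fin d), Continuous fun θ' : EuclideanSpace ℝ (Fin d) => Real.exp (-‖θ' - x‖ ^ 2 / σ) := by
    intro x
    exact Real.continuous_exp.comp
      ((((continuous_id.sub continuous_const).norm.pow 2).neg).div_const σ)
  have hfc : ∀ x : EuclideanSpace ℝ (Fin d), Continuous (f x) := by
    intro x
    exact ((hec x).neg.smul hGcont).add
      ((continuous_const.mul (hec x)).smul (continuous_const.sub continuous_id))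
  -- first moments
  have first_moment : ∀ (ν : Measure (EuclideanSpace ℝ (Fin d))) [IsProbabilityMeasure ν],
      Integrable (fun x : EuclideanSpace ℝ (Fin d) => ‖x‖ ^ 2) ν → Integrable (fun x : EuclideanSpace ℝ (Fin d) => ‖x‖) ν := by
    intro ν _ hν
    refine Integrable.mono' (((integrable_const (1:ℝ)).add hν).div_const 2)
      continuous_norm.aestronglyMeasurable (Filter.Eventually.of_forall fun x => ?_)
    rw [Real.norm_eq_abs, abs_of_nonneg (norm_nonneg x)]
    have := sq_nonneg (‖x‖ - 1)
    simp only [Pi.add_apply]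
    nlinarith
  have hρ1 : Integrable (fun x : EuclideanSpace ℝ (Fin d) => ‖x‖) ρ := first_moment ρ hρ2
  have hμ1 : Integrable (fun x : EuclideanSpace ℝ (Fin d) => ‖x‖) μ := first_moment μ hμ2
  -- integrability of f x over ρ
  have hboundρ : ∀ x : EuclideanSpace ℝ (Fin d), Integrable (fun θ' : EuclideanSpace ℝ (Fin d) => (b₁ + (2 / σ) * ‖x‖) + (b₁ + 2 / σ) * ‖θ'‖) ρ :=
    fun x => (integrable_const _).add (hρ1.const_mul _)
  have hfi : ∀ x : EuclideanSpace ℝ (Fin d), Integrable (f x) ρ := by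
    intro x
    refine Integrable.mono' (hboundρ x) (hfc x).aestronglyMeasurable
      (Filter.Eventually.of_forall fun θ' => hnormf x θ')
  -- norm bound on steinPhi
  set M : ℝ := ∫ θ' : EuclideanSpace ℝ (Fin d), ‖θ'‖ ∂ρ with hM
  have hM0 : 0 ≤ M := integral_nonneg fun _ => norm_nonneg _
  have hphibound : ∀ x : EuclideanSpace ℝ (Fin d), ‖steinPhi σ V ρ x‖ ≤ (b₁ + (2 / σ) * ‖x‖) + (b₁ + 2 / σ) * M := by
    intro x
    rw [hphi]
    calc ‖∫ θ', f x θ' ∂ρ‖ ≤ ∫ θ', ‖f x θ'‖ ∂ρ := norm_integral_le_integral_norm _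
      _ ≤ ∫ θ', ((b₁ + (2 / σ) * ‖x‖) + (b₁ + 2 / σ) * ‖θ'‖) ∂ρ :=
          integral_mono (hfi x).norm (hboundρ x) (hnormf x)
      _ = (b₁ + (2 / σ) * ‖x‖) + (b₁ + 2 / σ) * M := by
          rw [integral_add (integrable_const _) (hρ1.const_mul _),
            integral_const, integral_const_mul]
          simp [hM]
  -- measurability of steinPhi
  have hFjoint : Continuous fun p : EuclideanSpace ℝ (Fin d) × EuclideanSpace ℝ (Fin d) => f p.1 p.2 := by
    have hej : Continuous fun p : EuclideanSpace ℝ (Fin d) × EuclideanSpace ℝ (Fin d) => Real.exp (-‖p.2 - p.1‖ ^ 2 / σ) :=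
      Real.continuous_exp.comp
        ((((continuous_snd.sub continuous_fst).norm.pow 2).neg).div_const σ)
    exact (hej.neg.smul (hGcont.comp continuous_snd)).add
      ((continuous_const.mul hej).smul (continuous_fst.sub continuous_snd))
  have hphim : AEStronglyMeasurable (fun x : EuclideanSpace ℝ (Fin d) => steinPhi σ V ρ x) μ := by
    have : StronglyMeasurable fun x : EuclideanSpace ℝ (Fin d) => ∫ θ', f x θ' ∂ρ :=
      (hFjoint.stronglyMeasurable).integral_prod_right'
    simpa [hphi] using this.aestronglyMeasurable
  -- integrability of the inner products over μ
  have hinner1 : Integrable (fun x : EuclideanSpace ℝ (Fin d) => ⟪x, -gradient V x⟫) μ := by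
    refine Integrable.mono' ((hμ1.const_mul b₁).add (hμ2.const_mul b₁))
      (continuous_id.aestronglyMeasurable.inner hGcont.neg.aestronglyMeasurable)
      (Filter.Eventually.of_forall fun x => ?_)
    rw [Real.norm_eq_abs]
    calc |⟪x, -gradient V x⟫| ≤ ‖x‖ * ‖-gradient V x‖ := abs_real_inner_le_norm _ _
      _ = ‖x‖ * ‖gradient V x‖ := by rw [norm_neg]
      _ ≤ ‖x‖ * (b₁ * (1 + ‖x‖)) :=
          mul_le_mul_of_nonneg_left (hgrow x) (norm_nonneg _)
      _ = b₁ * ‖x‖ + b₁ * ‖x‖ ^ 2 := by ring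
  have hinner2 : Integrable (fun x : EuclideanSpace ℝ (Fin d) => ⟪x, steinPhi σ V ρ x⟫) μ := by
    refine Integrable.mono'
      ((hμ1.const_mul (b₁ + (b₁ + 2 / σ) * M)).add (hμ2.const_mul (2 / σ)))
      (continuous_id.aestronglyMeasurable.inner hphim)
      (Filter.Eventually.of_forall fun x => ?_)
    rw [Real.norm_eq_abs]
    calc |⟪x, steinPhi σ V ρ x⟫| ≤ ‖x‖ * ‖steinPhi σ V ρ x‖ := abs_real_inner_le_norm _ _
      _ ≤ ‖x‖ * ((b₁ + (2 / σ) * ‖x‖) + (b₁ + 2 / σ) * M) :=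
          mul_le_mul_of_nonneg_left (hphibound x) (norm_nonneg _)
      _ = (b₁ + (b₁ + 2 / σ) * M) * ‖x‖ + (2 / σ) * ‖x‖ ^ 2 := by ring
  -- pointwise bound on ⟪x, φ(x)⟫
  set R : ℝ := ∫ θ' : EuclideanSpace ℝ (Fin d), ‖θ'‖ ^ 2 ∂ρ with hR
  have hinnerphi : ∀ x : EuclideanSpace ℝ (Fin d),
      ⟪x, steinPhi σ V ρ x⟫ ≤ (b₁ / 2 + (b₁ + 3 / σ) * ‖x‖ ^ 2) + (b₁ / 2 + 1 / σ) * R := by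
    intro x
    have hptwise : ∀ θ' : EuclideanSpace ℝ (Fin d),
        ⟪x, f x θ'⟫ ≤ (b₁ / 2 + (b₁ + 3 / σ) * ‖x‖ ^ 2) + (b₁ / 2 + 1 / σ) * ‖θ'‖ ^ 2 := by
      intro θ'
      have h1 : ⟪x, f x θ'⟫ ≤ ‖x‖ * ((b₁ + (2 / σ) * ‖x‖) + (b₁ + 2 / σ) * ‖θ'‖) :=
        le_trans (real_inner_le_norm _ _)
          (mul_le_mul_of_nonneg_left (hnormf x θ') (norm_nonneg _))
      have hσinv : (0:ℝ) < 1 / σ := by positivity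
      have key : ((b₁ / 2 + (b₁ + 3 / σ) * ‖x‖ ^ 2) + (b₁ / 2 + 1 / σ) * ‖θ'‖ ^ 2)
          - ‖x‖ * ((b₁ + (2 / σ) * ‖x‖) + (b₁ + 2 / σ) * ‖θ'‖)
          = (b₁ / 2) * (‖x‖ - 1) ^ 2 + (b₁ / 2) * (‖x‖ - ‖θ'‖) ^ 2
            + (1 / σ) * (‖x‖ - ‖θ'‖) ^ 2 := by ring
      linarith [h1, key, mul_nonneg hσinv.le (sq_nonneg (‖x‖ - ‖θ'‖)),
        mul_nonneg hb₁.le (sq_nonneg (‖x‖ - 1)),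
        mul_nonneg hb₁.le (sq_nonneg (‖x‖ - ‖θ'‖))]
    have heq : ⟪x, steinPhi σ V ρ x⟫ = ∫ θ', ⟪x, f x θ'⟫ ∂ρ := by
      rw [hphi, integral_inner (hfi x) x]
    rw [heq]
    calc ∫ θ', ⟪x, f x θ'⟫ ∂ρ
        ≤ ∫ θ', ((b₁ / 2 + (b₁ + 3 / σ) * ‖x‖ ^ 2) + (b₁ / 2 + 1 / σ) * ‖θ'‖ ^ 2) ∂ρ := by
          refine integral_mono ((hfi x).const_inner x)
            ((integrable_const _).add (hρ2.const_mul _)) hptwise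
      _ = (b₁ / 2 + (b₁ + 3 / σ) * ‖x‖ ^ 2) + (b₁ / 2 + 1 / σ) * R := by
          rw [integral_add (integrable_const _) (hρ2.const_mul _),
            integral_const, integral_const_mul]
          simp [hR]
  -- split the main integral
  have hsplit : ∫ x, ⟪x, -gradient V x + α • steinPhi σ V ρ x⟫ ∂μ
      = (∫ x, ⟪x, -gradient V x⟫ ∂μ) + α * ∫ x, ⟪x, steinPhi σ V ρ x⟫ ∂μ := by
    have : ∀ x : EuclideanSpace ℝ (Fin d), ⟪x, -gradient V x + α • steinPhi σ V ρ x⟫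
        = ⟪x, -gradient V x⟫ + α * ⟪x, steinPhi σ V ρ x⟫ := by
      intro x
      rw [inner_add_right, real_inner_smul_right]
    simp_rw [this]
    rw [integral_add hinner1 (hinner2.const_mul α), integral_const_mul]
  -- bound the first term
  have hterm1 : ∫ x, ⟪x, -gradient V x⟫ ∂μ ≤ b₁ - a₁ * U ^ 2 := by
    calc ∫ x, ⟪x, -gradient V x⟫ ∂μ ≤ ∫ x : EuclideanSpace ℝ (Fin d), (b₁ - a₁ * ‖x‖ ^ 2) ∂μ :=
          integral_mono hinner1 ((integrable_const _).sub (hμ2.const_mul _)) hdis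
      _ = b₁ - a₁ * U ^ 2 := by
          rw [integral_sub (integrable_const _) (hμ2.const_mul _),
            integral_const, integral_const_mul, hμU]
          simp
  -- bound the second term
  have hR0 : R ≤ U ^ 2 := hρU
  have hterm2 : ∫ x, ⟪x, steinPhi σ V ρ x⟫ ∂μ ≤ b₁ + (2 * b₁ + 4 / σ) * U ^ 2 := by
    have hcoef : (0:ℝ) ≤ b₁ / 2 + 1 / σ := by positivity
    calc ∫ x, ⟪x, steinPhi σ V ρ x⟫ ∂μ
        ≤ ∫ x : EuclideanSpace ℝ (Fin d), ((b₁ / 2 + (b₁ + 3 / σ) * ‖x‖ ^ 2) + (b₁ / 2 + 1 / σ) * R) ∂μ :=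
          integral_mono hinner2
            (((integrable_const _).add (hμ2.const_mul _)).add (integrable_const _))
            hinnerphi
      _ = (b₁ / 2 + (b₁ + 3 / σ) * U ^ 2) + (b₁ / 2 + 1 / σ) * R := by
          have iA : Integrable
              (fun x : EuclideanSpace ℝ (Fin d) => b₁ / 2 + (b₁ + 3 / σ) * ‖x‖ ^ 2) μ :=
            (integrable_const _).add (hμ2.const_mul _)
          rw [integral_add iA (integrable_const _),
            integral_add (integrable_const _) (hμ2.const_mul _),
            integral_const, integral_const_mul, hμU]
          simp
      _ ≤ (b₁ / 2 + (b₁ + 3 / σ) * U ^ 2) + (b₁ / 2 + 1 / σ) * U ^ 2 := by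
          exact add_le_add le_rfl (mul_le_mul_of_nonneg_left hR0 hcoef)
      _ ≤ b₁ + (2 * b₁ + 4 / σ) * U ^ 2 := by
          have hU2 : (0:ℝ) ≤ U ^ 2 := sq_nonneg U
          have key : (b₁ + (2 * b₁ + 4 / σ) * U ^ 2)
              - ((b₁ / 2 + (b₁ + 3 / σ) * U ^ 2) + (b₁ / 2 + 1 / σ) * U ^ 2)
              = b₁ / 2 + (b₁ / 2) * U ^ 2 := by ring
          linarith [key, mul_nonneg hb₁.le hU2]
  -- combine
  rw [hsplit]
  have h2 := mul_le_mul_of_nonneg_left hterm2 hα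
  have key : (b₁ - a₁ * U ^ 2) + α * (b₁ + (2 * b₁ + 4 / σ) * U ^ 2)
      = b₁ * (1 + α) - (a₁ - α * (2 * b₁ + 4 / σ)) * U ^ 2 := by ring
  linarith [hterm1, h2, key]
end

section
/- Let η, λ, b > 0 with 2·η·λ ≤ 1, and let v : ℕ → ℝ be a sequence with v(k) ≥ 0 for all k and v(k+1) − v(k) ≤ max( 2η·(b − λ·v(k)) + 2η², 0 ) for all k. Then v(k) ≤ v(0) + (b + η)/λ for every k ∈ ℕ. -/
/-- Discrete Gronwall-type recursion: if `v` is nonnegative and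
`v(k+1) - v(k) ≤ max (2η(b - λ v(k)) + 2η²) 0`, then `v(k) ≤ v(0) + (b + η)/λ`. -/
theorem discrete_gronwall_moment (η lam b : ℝ) (hη : 0 < η) (hlam : 0 < lam) (hb : 0 < b)
    (hstep : 2 * η * lam ≤ 1) (v : ℕ → ℝ) (hv : ∀ k, 0 ≤ v k)
    (hrec : ∀ k, v (k + 1) - v k ≤ max (2 * η * (b - lam * v k) + 2 * η ^ 2) 0) :
    ∀ k, v k ≤ v 0 + (b + η) / lam := by
  have hB : 0 ≤ (b + η) / lam := by positivity
  have key : ∀ k, v k ≤ max (v 0) ((b + η) / lam) := by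
    intro k
    induction k with
    | zero => exact le_max_left _ _
    | succ n ih =>
      rcases le_or_gt ((b + η) / lam) (v n) with h | h
      · -- increment is nonpositive
        have hvn : b + η ≤ lam * v n := by
          rw [div_le_iff₀ hlam] at h; linarith [mul_comm (v n) lam]
        have hneg : 2 * η * (b - lam * v n) + 2 * η ^ 2 ≤ 0 := by nlinarith
        have := hrec n
        have : v (n + 1) ≤ v n := by
          have hm : max (2 * η * (b - lam * v n) + 2 * η ^ 2) 0 = 0 :=
            max_eq_right hneg
          linarith [hrec n, hm ▸ hrec n]
        exact this.trans ih
      · have h1 : v (n + 1) ≤ v n + max (2 * η * (b - lam * v n) + 2 * η ^ 2) 0 := by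
          linarith [hrec n]
        have h2 : v n + max (2 * η * (b - lam * v n) + 2 * η ^ 2) 0 ≤ (b + η) / lam := by
          rcases max_cases (2 * η * (b - lam * v n) + 2 * η ^ 2) 0 with ⟨he, _⟩ | ⟨he, _⟩
          · rw [he]
            have hv' : lam * v n ≤ b + η := by
              rw [lt_div_iff₀ hlam] at h; linarith [mul_comm (v n) lam]
            rw [show v n + (2 * η * (b - lam * v n) + 2 * η ^ 2) ≤ (b + η) / lam ↔ (v n + (2 * η * (b - lam * v n) + 2 * η ^ 2)) * lam ≤ b + η from (le_div_iff₀ hlam).symm.symm]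
            nlinarith
          · rw [he]; linarith
        exact le_max_of_le_right (h1.trans h2)
  intro k
  have := key k
  rcases max_cases (v 0) ((b + η) / lam) with ⟨he, _⟩ | ⟨he, _⟩ <;> rw [he] at this <;>
    linarith [hv 0]
end

section
/- Let 0 ≤ q < 1, A ≥ 0, η > 0, and D ∈ ℝ with η ≤ (1−q)·D. Let u : ℕ → ℝ be a sequence with u(0) = 0, u(k) ≥ 0 for all k, and u(k+1)² ≤ q·u(k)² + A·u(k) + η·D for all k. Then u(k) ≤ (A + (1−q)·D)/(1−q) for every k ∈ ℕ. -/
/-- Quadratic recursion bound from the Mean-Field Limit proof: if `u 0 = 0`, `u ≥ 0`,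
`u(k+1)² ≤ q u(k)² + A u(k) + ηD` with `0 ≤ q < 1`, `A ≥ 0`, `η > 0`, `η ≤ (1-q)D`, then
`u k ≤ (A + (1-q)D)/(1-q)` for all `k`. -/
theorem quadratic_recursion_bound (q A η D : ℝ) (hq0 : 0 ≤ q) (hq1 : q < 1)
    (hA : 0 ≤ A) (hη : 0 < η) (hηD : η ≤ (1 - q) * D)
    (u : ℕ → ℝ) (hu0 : u 0 = 0) (hu : ∀ k, 0 ≤ u k)
    (hrec : ∀ k, u (k + 1) ^ 2 ≤ q * u k ^ 2 + A * u k + η * D) :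
    ∀ k, u k ≤ (A + (1 - q) * D) / (1 - q) := by
  have h1q : 0 < 1 - q := by linarith
  set B := (A + (1 - q) * D) / (1 - q) with hB
  have hBeq : B * (1 - q) = A + (1 - q) * D := by
    rw [hB, div_mul_cancel₀ _ h1q.ne']
  have hD : 0 < D := by nlinarith
  have hBpos : 0 ≤ B := by positivity
  intro k
  induction k with
  | zero => simpa [hu0] using hBpos
  | succ n ih =>
    have hrecn := hrec n
    have hun := hu n
    have hηB : η ≤ B * (1 - q) := by linarith [hBeq]
    have hsq : u (n + 1) ^ 2 ≤ B ^ 2 := by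
      have h1 : q * u n ^ 2 ≤ q * B ^ 2 :=
        mul_le_mul_of_nonneg_left (pow_le_pow_left₀ hun ih 2) hq0
      have h2 : A * u n ≤ A * B := mul_le_mul_of_nonneg_left ih hA
      have h3 : η * D ≤ B * (1 - q) * D := mul_le_mul_of_nonneg_right hηB hD.le
      nlinarith [hBeq]
    nlinarith [hu (n + 1)]
end
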